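/- arXiv:2602.12626 — 7 statements merged into one kernel-verified Lean document; each statement's English description precedes it below -/
import Mathlib

section
/- Let n ≥ 1. For every x ∈ ℝ^n and w ∈ ℂ^n, the series ∑_{α ∈ ℕ^n} Φ_α(x) ζ_α(w), where ζ_α(w) = (π^{n/2} 2^{|α|} α!)^{-1/2} w^α, converges absolutely and its sum equals π^{-n/2} e^{(1/4)∑_{j=1}^n w_j²} e^{-(1/2)∑_{j=1}^n (x_j - w_j)²}. -/
open MeasureTheory Complex
open scoped Real ENNReal InnerProductSpace

noncomputable section

namespace QuantumHermite

abbrev Rn (n : ℕ) := Fin n → ℝ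
abbrev R2n (n : ℕ) := Rn n × Rn n
abbrev Cn (n : ℕ) := Fin n → ℂ
abbrev C2n (n : ℕ) := Cn n × Cn n

/-- The one-dimensional normalized Hermite function. -/
def herm1 (k : ℕ) (x : ℝ) : ℝ :=
  (-1 : ℝ) ^ k * (Real.pi ^ ((1 : ℝ) / 2) * (k.factorial : ℝ) * 2 ^ k) ^ (-(1 : ℝ) / 2) *
    Real.exp (x ^ 2 / 2) * iteratedDeriv k (fun t : ℝ => Real.exp (-t ^ 2)) x

/-- The normalized Hermite function `Φ_μ` on `ℝ^m`, as a product of one-dimensional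
Hermite functions. -/
def hermite {m : ℕ} (μ : Fin m → ℕ) (x : Fin m → ℝ) : ℝ := ∏ j, herm1 (μ j) (x j)

/-- The scaled Hermite function `Φ_α^λ` on `ℝ^n`. -/
def hermiteScaled (n : ℕ) (lam : ℝ) (α : Fin n → ℕ) (x : Rn n) : ℝ :=
  |lam| ^ ((n : ℝ) / 4) * hermite α (fun j => Real.sqrt |lam| * x j)

/-- `Φ_α^λ` as a complex valued function. -/
def hermiteFunC (n : ℕ) (lam : ℝ) (α : Fin n → ℕ) : Rn n → ℂ :=
  fun x => (hermiteScaled n lam α x : ℂ)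

/-- The element of `L²` determined by a function (junk value `0` if the function is not
square integrable). -/
def toL2 {E : Type*} [MeasureSpace E] (f : E → ℂ) : Lp ℂ 2 (volume : Measure E) := by
  classical exact if h : MemLp f 2 volume then h.toLp f else 0

abbrev Hspace (n : ℕ) := Lp ℂ 2 (volume : Measure (Rn n))

/-- `Φ_α^λ` as an element of `L²(ℝ^n)`. -/
def hermL2 (n : ℕ) (lam : ℝ) (α : Fin n → ℕ) : Hspace n := toL2 (hermiteFunC n lam α)

/-- The pointwise action of the Weyl transform `π_λ(f)` on a function `φ`:
`(π_λ(f)φ)(ξ) = ∫ f(x,u) e^{iλ(x·ξ + x·u/2)} φ(ξ+u) dx du`. -/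
def weylAct (n : ℕ) (lam : ℝ) (f : R2n n → ℂ) (φ : Rn n → ℂ) (ξ : Rn n) : ℂ :=
  ∫ p : R2n n,
    f p * Complex.exp (Complex.I * (lam : ℂ) *
      (((∑ j, p.1 j * ξ j : ℝ) : ℂ) + ((∑ j, p.1 j * p.2 j : ℝ) : ℂ) / 2)) * φ (ξ + p.2)

/-- `c(λ) = (λ/2) coth(λ/2)`. -/
def cLam (lam : ℝ) : ℝ := lam / 2 * (Real.cosh (lam / 2) / Real.sinh (lam / 2))

/-- The function `Ψ_μ^λ` on `ℝ^{2n}`:  `Ψ_μ^λ(ξ) = c(λ)^{n/2} Φ_μ(c(λ)^{1/2} ξ)`. -/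
def PsiFun (n : ℕ) (lam : ℝ) (μ : (Fin n → ℕ) × (Fin n → ℕ)) (ξ : R2n n) : ℝ :=
  cLam lam ^ ((n : ℝ) / 2) *
    (hermite μ.1 (fun j => Real.sqrt (cLam lam) * ξ.1 j) *
      hermite μ.2 (fun j => Real.sqrt (cLam lam) * ξ.2 j))

/-- The pointwise action of `S_μ^λ = π_λ(Ψ_μ^λ)` on a function `φ`. -/
def SAct (n : ℕ) (lam : ℝ) (μ : (Fin n → ℕ) × (Fin n → ℕ)) (φ : Rn n → ℂ) (ξ : Rn n) : ℂ :=
  weylAct n lam (fun p => (PsiFun n lam μ p : ℂ)) φ ξ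

/-- `S_μ^λ Φ_α^λ` as an element of `L²(ℝ^n)`. -/
def SmuApply (n : ℕ) (lam : ℝ) (μ : (Fin n → ℕ) × (Fin n → ℕ)) (α : Fin n → ℕ) : Hspace n :=
  toL2 (SAct n lam μ (hermiteFunC n lam α))

/-- The total degree `|μ|` of a double multi-index. -/
def deg {n : ℕ} (μ : (Fin n → ℕ) × (Fin n → ℕ)) : ℕ := (∑ j, μ.1 j) + ∑ j, μ.2 j

/-- `T` is a Hilbert–Schmidt operator (computed in the orthonormal basis `Φ_α^λ`). -/
def IsHS (n : ℕ) (lam : ℝ) (T : Hspace n →L[ℂ] Hspace n) : Prop :=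
  Summable fun α : Fin n → ℕ => ‖T (hermL2 n lam α)‖ ^ 2

/-- The Hilbert–Schmidt inner product `⟨S,T⟩ = tr(T*S)`, computed in the orthonormal basis
`Φ_α^λ`. -/
def hsInner (n : ℕ) (lam : ℝ) (S T : Hspace n →L[ℂ] Hspace n) : ℂ :=
  ∑' α : Fin n → ℕ, ⟪T (hermL2 n lam α), S (hermL2 n lam α)⟫_ℂ

/-- The Hilbert–Schmidt inner product `⟨T, S_μ^λ⟩ = tr((S_μ^λ)* T)`. -/
def hsCoeff (n : ℕ) (lam : ℝ) (T : Hspace n →L[ℂ] Hspace n)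
    (μ : (Fin n → ℕ) × (Fin n → ℕ)) : ℂ :=
  ∑' α : Fin n → ℕ, ⟪SmuApply n lam μ α, T (hermL2 n lam α)⟫_ℂ

/-- The twisted heat kernel `p_t^λ` on `ℝ^{2n}`. -/
def heatKernel (n : ℕ) (lam t : ℝ) (ξ : R2n n) : ℝ :=
  ((4 * Real.pi)⁻¹) ^ n * lam ^ n * ((Real.sinh (t * lam))⁻¹) ^ n *
    Real.exp (-(lam / 4) * (Real.cosh (t * lam) / Real.sinh (t * lam)) *
      ((∑ j, ξ.1 j ^ 2) + ∑ j, ξ.2 j ^ 2))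

/-- The symplectic form `[ξ,η] = u·y − x·v` on `ℝ^{2n}`. -/
def symp (n : ℕ) (ξ η : R2n n) : ℝ := (∑ j, ξ.2 j * η.1 j) - ∑ j, ξ.1 j * η.2 j

/-- The constant `c_{n,λ} = (4π)^{-n} λ^n (sinh λ)^{-n}`. -/
def cnl (n : ℕ) (lam : ℝ) : ℝ := ((4 * Real.pi)⁻¹) ^ n * lam ^ n * ((Real.sinh lam)⁻¹) ^ n

/-- The linear map `σ_λ` on `ℂ^{2n}`. -/
def sigmaLam (n : ℕ) (lam : ℝ) (ζ : C2n n) : C2n n :=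
  (fun j => (Real.sqrt (lam / Real.sinh lam) : ℂ) *
      ((Real.cosh (lam / 2) : ℂ) * ζ.1 j - Complex.I * (Real.sinh (lam / 2) : ℂ) * ζ.2 j),
   fun j => (Real.sqrt (lam / Real.sinh lam) : ℂ) *
      ((Real.cosh (lam / 2) : ℂ) * ζ.2 j + Complex.I * (Real.sinh (lam / 2) : ℂ) * ζ.1 j))

/-- The annihilation-type operator `A_j(c)ψ = ∂ψ/∂ξ_j + c ξ_j ψ`. -/
def Aop (n : ℕ) (c : ℝ) (j : Fin n) (ψ : Rn n → ℂ) (ξ : Rn n) : ℂ :=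
  fderiv ℝ ψ ξ (Pi.single j 1) + ((c * ξ j : ℝ) : ℂ) * ψ ξ

/-- The creation-type operator `A_j*(c)ψ = −∂ψ/∂ξ_j + c ξ_j ψ`. -/
def AopStar (n : ℕ) (c : ℝ) (j : Fin n) (ψ : Rn n → ℂ) (ξ : Rn n) : ℂ :=
  -fderiv ℝ ψ ξ (Pi.single j 1) + ((c * ξ j : ℝ) : ℂ) * ψ ξ

/-- The momentum operator `P_j φ = ∂φ/∂ξ_j`. -/
def Pop (n : ℕ) (j : Fin n) (φ : Rn n → ℂ) (ξ : Rn n) : ℂ := fderiv ℝ φ ξ (Pi.single j 1)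

/-- The position operator `(Q_j φ)(ξ) = ξ_j φ(ξ)`. -/
def Qop (n : ℕ) (j : Fin n) (φ : Rn n → ℂ) (ξ : Rn n) : ℂ := (ξ j : ℂ) * φ ξ


/-- The normalized monomial `ζ_α(w) = (π^{n/2} 2^{|α|} α!)^{-1/2} w^α`. -/
def zetaMon (n : ℕ) (α : Fin n → ℕ) (w : Fin n → ℂ) : ℂ :=
  (((Real.pi ^ ((n : ℝ) / 2) * 2 ^ (∑ j, α j) * ∏ j, ((α j).factorial : ℝ)) ^
      (-(1 : ℝ) / 2) : ℝ) : ℂ) * ∏ j, w j ^ α j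

/-! ### Auxiliary lemmas for the generating function identity -/

/-- The complex Gaussian `e^{-z²}`. -/
private def gC : ℂ → ℂ := fun z => Complex.exp (-z ^ 2)

private lemma gC_diff : Differentiable ℂ gC := ((differentiable_pow 2).neg).cexp

private lemma gC_iter_diff (k : ℕ) : Differentiable ℂ (iteratedDeriv k gC) :=
  (gC_diff.contDiff : ContDiff ℂ (k + 1 : ℕ) gC).differentiable_iteratedDeriv'

/-- The real iterated derivative of the Gaussian coincides with the complex one. -/
private lemma iter_ofReal (k : ℕ) (x : ℝ) :
    ((iteratedDeriv k (fun t : ℝ => Real.exp (-t ^ 2)) x : ℝ) : ℂ)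
      = iteratedDeriv k gC (x : ℂ) := by
  induction k generalizing x with
  | zero =>
    simp only [iteratedDeriv_zero, gC, Complex.ofReal_exp]
    push_cast
    ring_nf
  | succ k ih =>
    rw [iteratedDeriv_succ, iteratedDeriv_succ]
    have hD : HasDerivAt (fun t : ℝ => iteratedDeriv k gC (t : ℂ))
        (deriv (iteratedDeriv k gC) (x : ℂ)) x :=
      ((gC_iter_diff k (x : ℂ)).hasDerivAt).comp_ofReal
    have hfun : (fun t : ℝ => ((iteratedDeriv k (fun s : ℝ => Real.exp (-s ^ 2)) t : ℝ) : ℂ))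
        = fun t : ℝ => iteratedDeriv k gC (t : ℂ) := funext fun t => ih t
    have h2 : HasDerivAt
        (fun t : ℝ => ((iteratedDeriv k (fun s : ℝ => Real.exp (-s ^ 2)) t : ℝ) : ℂ))
        (deriv (iteratedDeriv k gC) (x : ℂ)) x := hfun ▸ hD
    have hre : HasDerivAt (iteratedDeriv k (fun s : ℝ => Real.exp (-s ^ 2)))
        ((deriv (iteratedDeriv k gC) (x : ℂ)).re) x := by
      simpa [Function.comp_def] using (Complex.reCLM.hasFDerivAt.comp_hasDerivAt x h2)
    have him : (deriv (iteratedDeriv k gC) (x : ℂ)).im = 0 := by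
      have h3 : HasDerivAt (fun _ : ℝ => (0 : ℝ))
          ((deriv (iteratedDeriv k gC) (x : ℂ)).im) x := by
        simpa [Function.comp_def] using (Complex.imCLM.hasFDerivAt.comp_hasDerivAt x h2)
      have h4 : HasDerivAt (fun _ : ℝ => (0 : ℝ)) (0 : ℝ) x := hasDerivAt_const x 0
      exact h3.unique h4
    rw [hre.deriv]
    exact Complex.ext rfl (by simpa using him.symm)

/-- Norm-summability of the Taylor series of the entire Gaussian. -/
private lemma summable_norm_taylor (c u : ℂ) :
    Summable fun k : ℕ => ‖((k.factorial : ℕ) : ℂ)⁻¹ * iteratedDeriv k gC c * u ^ k‖ := by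
  set R : NNReal := ‖u‖₊ + 1 with hR
  have hR0 : (0 : NNReal) < R := lt_of_lt_of_le zero_lt_one le_add_self
  have hball : HasFPowerSeriesOnBall gC (cauchyPowerSeries gC c R) c R :=
    (gC_diff.differentiableOn :
      DifferentiableOn ℂ gC (Metric.closedBall c R)).hasFPowerSeriesOnBall hR0
  have hu : u ∈ Metric.eball (0 : ℂ) (cauchyPowerSeries gC c R).radius := by
    rw [mem_emetric_ball_zero_iff]
    refine lt_of_lt_of_le ?_ hball.r_le
    exact_mod_cast lt_add_of_pos_right (‖u‖₊) zero_lt_one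
  have hs := (cauchyPowerSeries gC c R).summable_norm_apply hu
  refine hs.congr fun k => ?_
  have h2 : iteratedFDeriv ℂ k gC c (fun _ => u) = u ^ k • iteratedDeriv k gC c := by
    rw [iteratedDeriv_eq_iteratedFDeriv]
    simpa using ((iteratedFDeriv ℂ k gC c).map_smul_univ (fun _ => u) (fun _ => 1))
  have h1 := hball.factorial_smul u k
  rw [h2] at h1
  have hk : ((k.factorial : ℕ) : ℂ) ≠ 0 := Nat.cast_ne_zero.mpr k.factorial_ne_zero
  have h3 : (cauchyPowerSeries gC c R) k (fun _ => u)
      = ((k.factorial : ℕ) : ℂ)⁻¹ * iteratedDeriv k gC c * u ^ k := by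
    have h1' : ((k.factorial : ℕ) : ℂ) * ((cauchyPowerSeries gC c R) k fun _ => u)
        = u ^ k * iteratedDeriv k gC c := by
      simpa [nsmul_eq_mul, smul_eq_mul] using h1
    have h4 : ((k.factorial : ℕ) : ℂ)⁻¹ *
        (((k.factorial : ℕ) : ℂ) * ((cauchyPowerSeries gC c R) k fun _ => u))
        = ((k.factorial : ℕ) : ℂ)⁻¹ * (u ^ k * iteratedDeriv k gC c) := by rw [h1']
    rw [← mul_assoc, inv_mul_cancel₀ hk, one_mul] at h4
    rw [h4]
    ring
  rw [h3]

/-- One-dimensional summand. -/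
private def F1 (k : ℕ) (x : ℝ) (w : ℂ) : ℂ :=
  (herm1 k x : ℂ) *
    (((Real.pi ^ ((1 : ℝ) / 2) * 2 ^ k * (k.factorial : ℝ)) ^ (-(1 : ℝ) / 2) : ℝ) : ℂ) * w ^ k

private lemma F1_eq (k : ℕ) (x : ℝ) (w : ℂ) :
    F1 k x w = (((Real.pi ^ (-(1 : ℝ) / 2) : ℝ) : ℂ) * Complex.exp ((x : ℂ) ^ 2 / 2)) *
      (((k.factorial : ℕ) : ℂ)⁻¹ * iteratedDeriv k gC (x : ℂ) * (-w / 2) ^ k) := by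
  have hc : (0 : ℝ) < Real.pi ^ ((1 : ℝ) / 2) * (k.factorial : ℝ) * 2 ^ k := by
    have := Real.pi_pos
    positivity
  have hconst : (Real.pi ^ ((1 : ℝ) / 2) * (k.factorial : ℝ) * 2 ^ k) ^ (-(1 : ℝ) / 2) *
      (Real.pi ^ ((1 : ℝ) / 2) * 2 ^ k * (k.factorial : ℝ)) ^ (-(1 : ℝ) / 2)
      = Real.pi ^ (-(1 : ℝ) / 2) * ((k.factorial : ℝ))⁻¹ * ((2 : ℝ) ^ k)⁻¹ := by
    rw [show Real.pi ^ ((1 : ℝ) / 2) * 2 ^ k * (k.factorial : ℝ)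
        = Real.pi ^ ((1 : ℝ) / 2) * (k.factorial : ℝ) * 2 ^ k by ring,
      ← Real.rpow_add hc, show (-(1 : ℝ) / 2 + -(1 : ℝ) / 2) = (-1 : ℝ) by norm_num,
      Real.rpow_neg_one, mul_inv, mul_inv]
    congr 1
    congr 1
    rw [show (-(1 : ℝ) / 2) = -((1 : ℝ) / 2) by ring, Real.rpow_neg Real.pi_pos.le]
  have hconstC := congrArg (fun r : ℝ => (r : ℂ)) hconst
  push_cast at hconstC
  simp only [F1, herm1]
  rw [← iter_ofReal k x,
    show (-w / 2 : ℂ) ^ k = (-1 : ℂ) ^ k * w ^ k * ((2 : ℂ) ^ k)⁻¹ from by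
      rw [neg_div, neg_pow, div_pow]; ring]
  push_cast
  linear_combination ((-1 : ℂ) ^ k * Complex.exp ((x : ℂ) ^ 2 / 2) *
    ((iteratedDeriv k (fun t : ℝ => Real.exp (-t ^ 2)) x : ℝ) : ℂ) * w ^ k) * hconstC

private lemma summable_norm_F1 (x : ℝ) (w : ℂ) : Summable fun k => ‖F1 k x w‖ := by
  have h := (summable_norm_taylor (x : ℂ) (-w / 2)).mul_left
    ‖((Real.pi ^ (-(1 : ℝ) / 2) : ℝ) : ℂ) * Complex.exp ((x : ℂ) ^ 2 / 2)‖
  refine h.congr fun k => ?_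
  rw [F1_eq]
  exact (norm_mul _ _).symm

private lemma hasSum_F1 (x : ℝ) (w : ℂ) :
    HasSum (fun k => F1 k x w)
      (((Real.pi ^ (-(1 : ℝ) / 2) : ℝ) : ℂ) * Complex.exp (w ^ 2 / 4) *
        Complex.exp (-((x : ℂ) - w) ^ 2 / 2)) := by
  have h := Complex.hasSum_taylorSeries_of_entire gC_diff (x : ℂ) ((x : ℂ) + -w / 2)
  have h' : HasSum (fun k => ((k.factorial : ℕ) : ℂ)⁻¹ * iteratedDeriv k gC (x : ℂ) * (-w / 2) ^ k)
      (gC ((x : ℂ) + -w / 2)) := by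
    refine h.congr_fun fun k => ?_
    rw [add_sub_cancel_left, smul_eq_mul, smul_eq_mul]
    ring
  have h2 := h'.mul_left (((Real.pi ^ (-(1 : ℝ) / 2) : ℝ) : ℂ) * Complex.exp ((x : ℂ) ^ 2 / 2))
  have hval : (((Real.pi ^ (-(1 : ℝ) / 2) : ℝ) : ℂ) * Complex.exp ((x : ℂ) ^ 2 / 2)) *
      gC ((x : ℂ) + -w / 2)
      = ((Real.pi ^ (-(1 : ℝ) / 2) : ℝ) : ℂ) * Complex.exp (w ^ 2 / 4) *
        Complex.exp (-((x : ℂ) - w) ^ 2 / 2) := by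
    simp only [gC]
    rw [mul_assoc, mul_assoc, ← Complex.exp_add, ← Complex.exp_add]
    congr 1
    ring
  rw [← hval]
  refine h2.congr_fun fun k => ?_
  rw [F1_eq]

/-- Product/sum interchange for absolutely convergent multi-indexed products. -/
private lemma pi_summable_tsum : ∀ {m : ℕ} (f : Fin m → ℕ → ℂ),
    (∀ j, Summable fun k => ‖f j k‖) →
    Summable (fun α : Fin m → ℕ => ‖∏ j, f j (α j)‖) ∧
      ∑' α : Fin m → ℕ, ∏ j, f j (α j) = ∏ j, ∑' k, f j k := by
  intro m
  induction m with
  | zero =>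
    intro f _
    haveI : Finite (Fin 0 → ℕ) := Finite.of_subsingleton
    constructor
    · exact Summable.of_finite
    · rw [tsum_eq_single (fun i => 0) (fun b hb => absurd (Subsingleton.elim b _) hb)]
      simp
  | succ m ih =>
    intro f hf
    obtain ⟨hs', ht'⟩ := ih (fun j => f j.succ) (fun j => hf j.succ)
    set G : (Fin m → ℕ) → ℂ := fun β => ∏ j, f j.succ (β j) with hGdef
    have hsG : Summable fun β => ‖G β‖ := hs'
    set e : ℕ × (Fin m → ℕ) ≃ (Fin (m + 1) → ℕ) := Fin.consEquiv (fun _ => ℕ) with he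
    have hcomp : ∀ p : ℕ × (Fin m → ℕ),
        (∏ j, f j (e p j)) = f 0 p.1 * G p.2 := by
      intro p
      rw [Fin.prod_univ_succ, hGdef]
      simp [he, Fin.consEquiv]
    have hG : Summable fun p : ℕ × (Fin m → ℕ) => ‖f 0 p.1 * G p.2‖ :=
      (hf 0).mul_norm hsG
    constructor
    · refine (Equiv.summable_iff e (f := fun α : Fin (m + 1) → ℕ => ‖∏ j, f j (α j)‖)).mp ?_
      refine hG.congr fun p => ?_
      simp only [Function.comp_apply, hcomp p]
    · have h1 : ∑' α : Fin (m + 1) → ℕ, ∏ j, f j (α j)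
          = ∑' p : ℕ × (Fin m → ℕ), f 0 p.1 * G p.2 := by
        rw [← Equiv.tsum_eq e (fun α : Fin (m + 1) → ℕ => ∏ j, f j (α j))]
        exact tsum_congr hcomp
      rw [h1, ← tsum_mul_tsum_of_summable_norm (hf 0) hsG, Fin.prod_univ_succ]
      rw [hGdef] at *
      rw [ht']

/-- Generating function identity for the Hermite functions:
`∑_α Φ_α(x) ζ_α(w) = π^{-n/2} e^{w²/4} e^{-(x-w)²/2}`, with absolute convergence. -/
theorem hermite_generating_identity (n : ℕ) (hn : 1 ≤ n) (x : Fin n → ℝ) (w : Fin n → ℂ) :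
    Summable (fun α : Fin n → ℕ => ‖(hermite α x : ℂ) * zetaMon n α w‖) ∧
    ∑' α : Fin n → ℕ, (hermite α x : ℂ) * zetaMon n α w =
      ((Real.pi ^ (-(n : ℝ) / 2) : ℝ) : ℂ) *
        Complex.exp ((1 / 4) * ∑ j, w j ^ 2) *
        Complex.exp (-(1 / 2) * ∑ j, ((x j : ℂ) - w j) ^ 2) := by
  have key : ∀ α : Fin n → ℕ,
      (hermite α x : ℂ) * zetaMon n α w = ∏ j, F1 (α j) (x j) (w j) := by
    intro α
    have hbase : Real.pi ^ ((n : ℝ) / 2) * 2 ^ (∑ j, α j) * ∏ j, ((α j).factorial : ℝ)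
        = ∏ j : Fin n, (Real.pi ^ ((1 : ℝ) / 2) * 2 ^ (α j) * ((α j).factorial : ℝ)) := by
      rw [Finset.prod_mul_distrib, Finset.prod_mul_distrib]
      congr 1
      congr 1
      · rw [Finset.prod_const, Finset.card_univ, Fintype.card_fin,
          ← Real.rpow_natCast (Real.pi ^ ((1 : ℝ) / 2)) n, ← Real.rpow_mul Real.pi_pos.le]
        congr 1
        ring
      · rw [Finset.prod_pow_eq_pow_sum]
    have hC : ((Real.pi ^ ((n : ℝ) / 2) * 2 ^ (∑ j, α j) * ∏ j, ((α j).factorial : ℝ)) ^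
          (-(1 : ℝ) / 2))
        = ∏ j, (Real.pi ^ ((1 : ℝ) / 2) * 2 ^ (α j) * ((α j).factorial : ℝ)) ^ (-(1 : ℝ) / 2) := by
      rw [hbase]
      exact (Real.finset_prod_rpow Finset.univ
        (fun j => Real.pi ^ ((1 : ℝ) / 2) * 2 ^ (α j) * ((α j).factorial : ℝ))
        (fun i _ => by positivity) (-(1 : ℝ) / 2)).symm
    simp only [hermite, zetaMon, F1, hC]
    push_cast
    rw [← Finset.prod_mul_distrib, ← Finset.prod_mul_distrib]
    exact Finset.prod_congr rfl fun j _ => by ring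
  obtain ⟨hsum, htsum⟩ := pi_summable_tsum (fun j k => F1 k (x j) (w j))
    (fun j => summable_norm_F1 (x j) (w j))
  constructor
  · refine hsum.congr fun α => ?_
    rw [key α]
  · rw [tsum_congr key, htsum]
    have hone : ∀ j : Fin n, ∑' k, F1 k (x j) (w j)
        = ((Real.pi ^ (-(1 : ℝ) / 2) : ℝ) : ℂ) * Complex.exp (w j ^ 2 / 4) *
          Complex.exp (-((x j : ℂ) - w j) ^ 2 / 2) := fun j => (hasSum_F1 (x j) (w j)).tsum_eq
    rw [Finset.prod_congr rfl (fun j _ => hone j), Finset.prod_mul_distrib,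
      Finset.prod_mul_distrib, ← Complex.exp_sum, ← Complex.exp_sum,
      Finset.prod_const, Finset.card_univ, Fintype.card_fin]
    congr 1
    congr 1
    · rw [← Complex.ofReal_pow, ← Real.rpow_natCast (Real.pi ^ (-(1 : ℝ) / 2)) n,
        ← Real.rpow_mul Real.pi_pos.le]
      norm_num
      congr 1
      ring
    · congr 1
      rw [Finset.mul_sum]
      refine Finset.sum_congr rfl fun j _ => ?_
      ring
    · congr 1
      rw [Finset.mul_sum]
      refine Finset.sum_congr rfl fun j _ => ?_
      ring

end QuantumHermite
end
end

section
/- Let n ≥ 1, λ ≠ 0, and let g ∈ 𝒮(ℝ^{2n}) be a Schwartz function. For every φ ∈ 𝒮(ℝ^n) and every 1 ≤ j ≤ n: π_λ(λ x_j g)φ = i(π_λ(g)(P_j φ) − P_j(π_λ(g)φ)) and π_λ(u_j g)φ = π_λ(g)(Q_j φ) − Q_j(π_λ(g)φ), where (x_j g)(x,u) = x_j g(x,u), (u_j g)(x,u) = u_j g(x,u), (Q_j φ)(ξ) = ξ_j φ(ξ), and P_j φ = ∂φ/∂ξ_j. -/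
open MeasureTheory Complex
open scoped Real ENNReal InnerProductSpace

noncomputable section

namespace QuantumHermite

instance instHasTemperateGrowthR2n (n : ℕ) :
    (volume : Measure (R2n n)).HasTemperateGrowth := by
  haveI : Measure.IsAddHaarMeasure
      ((volume : Measure (Rn n)).prod (volume : Measure (Rn n))) := Measure.prod.instIsAddHaarMeasure _ _
  haveI : (volume : Measure (R2n n)).IsAddHaarMeasure := this
  infer_instance

/-- The phase factor of the Weyl transform. -/
def phase (n : ℕ) (lam : ℝ) (p : R2n n) (ξ : Rn n) : ℂ :=
  Complex.exp (Complex.I * (lam : ℂ) *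
    (((∑ j, p.1 j * ξ j : ℝ) : ℂ) + ((∑ j, p.1 j * p.2 j : ℝ) : ℂ) / 2))

lemma norm_phase (n : ℕ) (lam : ℝ) (p : R2n n) (ξ : Rn n) : ‖phase n lam p ξ‖ = 1 := by
  have h : Complex.I * (lam : ℂ) *
      (((∑ j, p.1 j * ξ j : ℝ) : ℂ) + ((∑ j, p.1 j * p.2 j : ℝ) : ℂ) / 2) =
      ((lam * ((∑ j, p.1 j * ξ j) + (∑ j, p.1 j * p.2 j) / 2) : ℝ) : ℂ) * Complex.I := by
    push_cast; ring
  rw [phase, h, Complex.norm_exp_ofReal_mul_I]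

lemma continuous_phase (n : ℕ) (lam : ℝ) (ξ : Rn n) :
    Continuous (fun p : R2n n => phase n lam p ξ) := by
  apply Continuous.cexp
  apply Continuous.mul continuous_const
  apply Continuous.add
  · exact Complex.continuous_ofReal.comp <| continuous_finset_sum _ fun i _ =>
      (((continuous_apply i).comp continuous_fst).mul continuous_const)
  · exact (Complex.continuous_ofReal.comp <| continuous_finset_sum _ fun i _ =>
      (((continuous_apply i).comp continuous_fst).mul
        ((continuous_apply i).comp continuous_snd))).div_const 2

/-- The linear functional `v ↦ ∑ᵢ xᵢ vᵢ` (complex valued). -/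
def Mmap {n : ℕ} (p : R2n n) : Rn n →L[ℝ] ℂ :=
  ∑ i, p.1 i • (Complex.ofRealCLM.comp (ContinuousLinearMap.proj i : Rn n →L[ℝ] ℝ))

lemma Mmap_apply {n : ℕ} (p : R2n n) (v : Rn n) :
    Mmap p v = ((∑ i, p.1 i * v i : ℝ) : ℂ) := by
  simp [Mmap, Complex.real_smul]

lemma Mmap_norm_le {n : ℕ} (p : R2n n) : ‖Mmap p‖ ≤ n * ‖p‖ := by
  refine ContinuousLinearMap.opNorm_le_bound _ (by positivity) fun v => ?_
  rw [Mmap_apply, Complex.norm_real, Real.norm_eq_abs]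
  calc |∑ i, p.1 i * v i| ≤ ∑ i : Fin n, |p.1 i * v i| := Finset.abs_sum_le_sum_abs _ _
    _ ≤ ∑ _i : Fin n, ‖p‖ * ‖v‖ := by
        refine Finset.sum_le_sum fun i _ => ?_
        rw [abs_mul]
        gcongr
        · exact (norm_le_pi_norm p.1 i).trans (norm_fst_le p)
        · exact norm_le_pi_norm v i
    _ = n * ‖p‖ * ‖v‖ := by simp [mul_assoc]

lemma hasFDerivAt_inner {n : ℕ} (p : R2n n) (ξ : Rn n) :
    HasFDerivAt (fun ξ : Rn n => ((∑ i, p.1 i * ξ i : ℝ) : ℂ)) (Mmap p) ξ := by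
  have h : (fun ξ : Rn n => ((∑ i, p.1 i * ξ i : ℝ) : ℂ)) = ⇑(Mmap p) := by
    funext v; rw [Mmap_apply]
  rw [h]
  exact (Mmap p).hasFDerivAt

/-- The `ξ`-derivative of the integrand of the Weyl transform. -/
def Dmap (n : ℕ) (lam : ℝ) (g : R2n n → ℂ) (φ : Rn n → ℂ) (ξ : Rn n) (p : R2n n) :
    Rn n →L[ℝ] ℂ :=
  (g p * (Complex.I * (lam : ℂ)) * phase n lam p ξ * φ (ξ + p.2)) • Mmap p
    + (g p * phase n lam p ξ) • fderiv ℝ φ (ξ + p.2)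

lemma hasFDerivAt_phase (n : ℕ) (lam : ℝ) (p : R2n n) (ξ : Rn n) :
    HasFDerivAt (fun ξ => phase n lam p ξ)
      ((Complex.I * (lam : ℂ) * phase n lam p ξ) • Mmap p) ξ := by
  have hin : HasFDerivAt (fun ξ : Rn n => Complex.I * (lam : ℂ) *
      (((∑ i, p.1 i * ξ i : ℝ) : ℂ) + ((∑ i, p.1 i * p.2 i : ℝ) : ℂ) / 2))
      ((Complex.I * (lam : ℂ)) • Mmap p) ξ :=
    (((hasFDerivAt_inner p ξ).add_const _)).const_mul _
  simpa [phase, smul_smul, mul_comm, mul_assoc, mul_left_comm] using hin.cexp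

lemma hasFDerivAt_integrand (n : ℕ) (lam : ℝ) (g : R2n n → ℂ) (φ : SchwartzMap (Rn n) ℂ)
    (p : R2n n) (ξ : Rn n) :
    HasFDerivAt (fun ξ => g p * phase n lam p ξ * φ (ξ + p.2)) (Dmap n lam g (⇑φ) ξ p) ξ := by
  have h1 : HasFDerivAt (fun ξ => g p * phase n lam p ξ)
      ((g p) • ((Complex.I * (lam : ℂ) * phase n lam p ξ) • Mmap p)) ξ :=
    (hasFDerivAt_phase n lam p ξ).const_mul (g p)
  have h2 : HasFDerivAt (fun ξ : Rn n => φ (ξ + p.2)) (fderiv ℝ φ (ξ + p.2)) ξ := by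
    have hφ : HasFDerivAt (⇑φ) (fderiv ℝ φ (ξ + p.2)) (ξ + p.2) :=
      (((φ.smooth ⊤).differentiable (by simp)) (ξ + p.2)).hasFDerivAt
    have ht : HasFDerivAt (fun ξ : Rn n => ξ + p.2) (ContinuousLinearMap.id ℝ (Rn n)) ξ :=
      (hasFDerivAt_id ξ).add_const _
    simpa [Function.comp_def] using hφ.comp ξ ht
  have := h1.mul h2
  refine this.congr_fderiv ?_
  unfold Dmap
  ext v
  simp only [ContinuousLinearMap.add_apply, ContinuousLinearMap.coe_smul', Pi.smul_apply,
    smul_eq_mul, ContinuousLinearMap.smul_apply]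
  ring

lemma Dmap_norm_le (n : ℕ) (lam : ℝ) (g : R2n n → ℂ) (φ : SchwartzMap (Rn n) ℂ)
    {Cφ Cφ' : ℝ} (hCφ : ∀ x, ‖φ x‖ ≤ Cφ) (hCφ' : ∀ x, ‖fderiv ℝ (⇑φ) x‖ ≤ Cφ')
    (ξ : Rn n) (p : R2n n) :
    ‖Dmap n lam g (⇑φ) ξ p‖ ≤ ‖g p‖ * (|lam| * (n * ‖p‖) * Cφ + Cφ') := by
  have hC0 : 0 ≤ Cφ := le_trans (norm_nonneg _) (hCφ 0)
  have h1 : ‖(g p * (Complex.I * (lam : ℂ)) * phase n lam p ξ * φ (ξ + p.2)) • Mmap p‖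
      ≤ ‖g p‖ * (|lam| * (n * ‖p‖) * Cφ) := by
    have hns := norm_smul_le (g p * (Complex.I * (lam : ℂ)) * phase n lam p ξ * φ (ξ + p.2))
      (Mmap p)
    have : ‖g p * (Complex.I * (lam : ℂ)) * phase n lam p ξ * φ (ξ + p.2)‖
        = ‖g p‖ * |lam| * ‖φ (ξ + p.2)‖ := by
      simp only [norm_mul, norm_phase, mul_one, Complex.norm_I, one_mul, Complex.norm_real,
        Real.norm_eq_abs]
    rw [this] at hns
    refine hns.trans ?_
    calc ‖g p‖ * |lam| * ‖φ (ξ + p.2)‖ * ‖Mmap p‖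
        ≤ ‖g p‖ * |lam| * Cφ * ((n : ℝ) * ‖p‖) := by
          gcongr
          exacts [hCφ _, Mmap_norm_le p]
      _ = ‖g p‖ * (|lam| * (n * ‖p‖) * Cφ) := by ring
  have h2 : ‖(g p * phase n lam p ξ) • fderiv ℝ (⇑φ) (ξ + p.2)‖ ≤ ‖g p‖ * Cφ' := by
    have hns := norm_smul_le (g p * phase n lam p ξ) (fderiv ℝ (⇑φ) (ξ + p.2))
    rw [norm_mul, norm_phase, mul_one] at hns
    refine hns.trans ?_
    gcongr
    exact hCφ' _
  calc ‖Dmap n lam g (⇑φ) ξ p‖ ≤ _ + _ := norm_add_le _ _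
    _ ≤ ‖g p‖ * (|lam| * (n * ‖p‖) * Cφ) + ‖g p‖ * Cφ' := add_le_add h1 h2
    _ = ‖g p‖ * (|lam| * (n * ‖p‖) * Cφ + Cφ') := by ring

lemma continuous_Dmap (n : ℕ) (lam : ℝ) (g : SchwartzMap (R2n n) ℂ)
    (φ : SchwartzMap (Rn n) ℂ) (ξ : Rn n) :
    Continuous (fun p => Dmap n lam (⇑g) (⇑φ) ξ p) := by
  have hM : Continuous (fun p : R2n n => Mmap p) := by
    unfold Mmap
    exact continuous_finset_sum _ fun i _ =>
      ((continuous_apply i).comp continuous_fst).smul continuous_const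
  have hph := continuous_phase n lam ξ
  have hφc : Continuous (fun p : R2n n => φ (ξ + p.2)) :=
    φ.continuous.comp (continuous_const.add continuous_snd)
  have hfd : Continuous (fun p : R2n n => fderiv ℝ (⇑φ) (ξ + p.2)) :=
    ((φ.smooth ⊤).continuous_fderiv (by simp)).comp (continuous_const.add continuous_snd)
  exact ((((g.continuous.mul continuous_const).mul hph).mul hφc).smul hM).add
    ((g.continuous.mul hph).smul hfd)


/-- The commutator relations `π_λ(λ x_j g) = i[π_λ(g), P_j]` and
`π_λ(u_j g) = [π_λ(g), Q_j]`, applied to a Schwartz function. -/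
theorem weyl_commutator_relations (n : ℕ) (hn : 1 ≤ n) (lam : ℝ) (hlam : lam ≠ 0)
    (g : SchwartzMap (R2n n) ℂ) (φ : SchwartzMap (Rn n) ℂ) (j : Fin n) (ξ : Rn n) :
    weylAct n lam (fun p => ((lam * p.1 j : ℝ) : ℂ) * g p) (⇑φ) ξ =
      Complex.I * (weylAct n lam (⇑g) (Pop n j ⇑φ) ξ -
        Pop n j (weylAct n lam (⇑g) (⇑φ)) ξ) ∧
    weylAct n lam (fun p => ((p.2 j : ℝ) : ℂ) * g p) (⇑φ) ξ =
      weylAct n lam (⇑g) (Qop n j ⇑φ) ξ - Qop n j (weylAct n lam (⇑g) (⇑φ)) ξ := by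

  classical
  -- uniform bounds on `φ` and its derivative
  obtain ⟨Cφ, hCφ⟩ : ∃ C, ∀ x, ‖φ x‖ ≤ C := by
    obtain ⟨C, hC⟩ := φ.decay 0 0
    exact ⟨C, fun x => by simpa using hC.2 x⟩
  obtain ⟨Cφ', hCφ'⟩ : ∃ C, ∀ x, ‖fderiv ℝ (⇑φ) x‖ ≤ C := by
    obtain ⟨C, hC⟩ := φ.decay 0 1
    refine ⟨C, fun x => ?_⟩
    have e : ‖fderiv ℝ (⇑φ) x‖ = ‖iteratedFDeriv ℝ 1 (⇑φ) x‖ := by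
      rw [← norm_iteratedFDeriv_fderiv (n := 0), norm_iteratedFDeriv_zero]
    rw [e]
    simpa using hC.2 x
  have hC0 : 0 ≤ Cφ := le_trans (norm_nonneg _) (hCφ 0)
  have hC0' : 0 ≤ Cφ' := le_trans (norm_nonneg _) (hCφ' 0)
  -- integrability of Schwartz data
  have hgi : Integrable (fun p : R2n n => ‖g p‖) volume := g.integrable.norm
  have hg1 : Integrable (fun p : R2n n => ‖p‖ * ‖g p‖) volume := by
    simpa using g.integrable_pow_mul volume 1
  -- measurability of integrands
  have hmeas : ∀ (ξ' : Rn n) (ψ : Rn n → ℂ), Continuous ψ →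
      AEStronglyMeasurable
        (fun p : R2n n => g p * phase n lam p ξ' * ψ (ξ' + p.2)) volume :=
    fun ξ' ψ hψ => ((g.continuous.mul (continuous_phase n lam ξ')).mul
      (hψ.comp (continuous_const.add continuous_snd))).aestronglyMeasurable
  have hPopφ_cont : Continuous (Pop n j ⇑φ) := by
    unfold Pop
    exact ((φ.smooth ⊤).continuous_fderiv (by simp)).clm_apply
      continuous_const
  have hPopφ_bd : ∀ x, ‖Pop n j (⇑φ) x‖ ≤ Cφ' * ‖(Pi.single j 1 : Rn n)‖ := fun x =>
    (ContinuousLinearMap.le_opNorm _ _).trans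
      (mul_le_mul_of_nonneg_right (hCφ' x) (norm_nonneg _))
  have hxj : ∀ p : R2n n, |p.1 j| ≤ ‖p‖ := fun p =>
    (norm_le_pi_norm p.1 j).trans (norm_fst_le p)
  have huj : ∀ p : R2n n, |p.2 j| ≤ ‖p‖ := fun p =>
    (norm_le_pi_norm p.2 j).trans (norm_snd_le p)
  -- the basic integrands and their integrability
  have I0 : Integrable (fun p : R2n n => g p * phase n lam p ξ * φ (ξ + p.2)) volume := by
    refine (hgi.mul_const Cφ).mono' (hmeas ξ (⇑φ) φ.continuous) (ae_of_all _ fun p => ?_)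
    rw [norm_mul, norm_mul, norm_phase, mul_one]
    exact mul_le_mul_of_nonneg_left (hCφ _) (norm_nonneg _)
  have I1 : Integrable (fun p : R2n n => g p * phase n lam p ξ * Pop n j (⇑φ) (ξ + p.2))
      volume := by
    refine (hgi.mul_const (Cφ' * ‖(Pi.single j 1 : Rn n)‖)).mono'
      (hmeas ξ _ hPopφ_cont) (ae_of_all _ fun p => ?_)
    rw [norm_mul, norm_mul, norm_phase, mul_one]
    exact mul_le_mul_of_nonneg_left (hPopφ_bd _) (norm_nonneg _)
  have I2 : Integrable (fun p : R2n n =>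
      g p * (Complex.I * (lam : ℂ)) * phase n lam p ξ * φ (ξ + p.2) * ((p.1 j : ℝ) : ℂ))
      volume := by
    refine ((hg1.const_mul (|lam| * Cφ)).mono'
      ((((g.continuous.mul continuous_const).mul (continuous_phase n lam ξ)).mul
        (φ.continuous.comp (continuous_const.add continuous_snd))).mul
        (Complex.continuous_ofReal.comp
          ((continuous_apply j).comp continuous_fst))).aestronglyMeasurable
      (ae_of_all _ fun p => ?_))
    have : ‖g p * (Complex.I * (lam : ℂ)) * phase n lam p ξ * φ (ξ + p.2) * ((p.1 j : ℝ) : ℂ)‖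
        = ‖g p‖ * |lam| * ‖φ (ξ + p.2)‖ * |p.1 j| := by
      simp only [norm_mul, norm_phase, mul_one, Complex.norm_I, one_mul, Complex.norm_real,
        Real.norm_eq_abs]
    rw [this]
    calc ‖g p‖ * |lam| * ‖φ (ξ + p.2)‖ * |p.1 j| ≤ ‖g p‖ * |lam| * Cφ * ‖p‖ := by
          gcongr
          exacts [hCφ _, hxj p]
      _ = |lam| * Cφ * (‖p‖ * ‖g p‖) := by ring
  have I3 : Integrable (fun p : R2n n =>
      ((p.2 j : ℝ) : ℂ) * g p * phase n lam p ξ * φ (ξ + p.2)) volume := by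
    refine ((hg1.const_mul Cφ).mono'
      ((((Complex.continuous_ofReal.comp
          ((continuous_apply j).comp continuous_snd)).mul g.continuous).mul
        (continuous_phase n lam ξ)).mul
        (φ.continuous.comp (continuous_const.add continuous_snd))).aestronglyMeasurable
      (ae_of_all _ fun p => ?_))
    have : ‖((p.2 j : ℝ) : ℂ) * g p * phase n lam p ξ * φ (ξ + p.2)‖
        = |p.2 j| * ‖g p‖ * ‖φ (ξ + p.2)‖ := by
      simp only [norm_mul, norm_phase, mul_one, Complex.norm_real, Real.norm_eq_abs]
    rw [this]
    calc |p.2 j| * ‖g p‖ * ‖φ (ξ + p.2)‖ ≤ ‖p‖ * ‖g p‖ * Cφ := by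
          gcongr
          exacts [huj p, hCφ _]
      _ = Cφ * (‖p‖ * ‖g p‖) := by ring
  -- the dominating function for the derivative
  have hbint : Integrable (fun p : R2n n => ‖g p‖ * (|lam| * (n * ‖p‖) * Cφ + Cφ')) volume := by
    have he : (fun p : R2n n => ‖g p‖ * (|lam| * (n * ‖p‖) * Cφ + Cφ'))
        = fun p => (|lam| * n * Cφ) * (‖p‖ * ‖g p‖) + Cφ' * ‖g p‖ := by
      funext p; ring
    rw [he]
    exact (hg1.const_mul _).add (hgi.const_mul _)
  have ID : Integrable (fun p : R2n n => Dmap n lam (⇑g) (⇑φ) ξ p) volume :=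
    hbint.mono' (continuous_Dmap n lam g φ ξ).aestronglyMeasurable
      (ae_of_all _ fun p => Dmap_norm_le n lam (⇑g) φ hCφ hCφ' ξ p)
  -- differentiation under the integral sign
  have hder : HasFDerivAt (fun ξ' => ∫ p : R2n n, g p * phase n lam p ξ' * φ (ξ' + p.2))
      (∫ p : R2n n, Dmap n lam (⇑g) (⇑φ) ξ p) ξ := by
    refine hasFDerivAt_integral_of_dominated_of_fderiv_le
      (F' := fun ξ' p => Dmap n lam (⇑g) (⇑φ) ξ' p)
      (bound := fun p => ‖g p‖ * (|lam| * (n * ‖p‖) * Cφ + Cφ')) Filter.univ_mem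
      (Filter.Eventually.of_forall fun ξ' => hmeas ξ' (⇑φ) φ.continuous) ?_
      (continuous_Dmap n lam g φ ξ).aestronglyMeasurable
      (ae_of_all _ fun p ξ' _ => Dmap_norm_le n lam (⇑g) φ hCφ hCφ' ξ' p) hbint
      (ae_of_all _ fun p ξ' _ => hasFDerivAt_integrand n lam (⇑g) φ p ξ')
    exact I0
  have hW : weylAct n lam (⇑g) (⇑φ)
      = fun ξ' => ∫ p : R2n n, g p * phase n lam p ξ' * φ (ξ' + p.2) := rfl
  -- the derivative of the transformed function
  have hPW : Pop n j (weylAct n lam (⇑g) (⇑φ)) ξ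
      = ∫ p : R2n n, (Dmap n lam (⇑g) (⇑φ) ξ p) (Pi.single j 1) := by
    unfold Pop
    rw [hW, hder.fderiv, ContinuousLinearMap.integral_apply ID]
  have heval : ∀ p : R2n n, (Dmap n lam (⇑g) (⇑φ) ξ p) (Pi.single j 1)
      = g p * (Complex.I * (lam : ℂ)) * phase n lam p ξ * φ (ξ + p.2) * ((p.1 j : ℝ) : ℂ)
        + g p * phase n lam p ξ * Pop n j (⇑φ) (ξ + p.2) := by
    intro p
    have hsum : (∑ i, p.1 i * (Pi.single j (1 : ℝ) : Rn n) i) = p.1 j := by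
      simp [Pi.single_apply]
    simp only [Dmap, ContinuousLinearMap.add_apply, ContinuousLinearMap.smul_apply,
      Mmap_apply, hsum, smul_eq_mul, Pop]
  have hsplit : Pop n j (weylAct n lam (⇑g) (⇑φ)) ξ
      = (∫ p : R2n n,
          g p * (Complex.I * (lam : ℂ)) * phase n lam p ξ * φ (ξ + p.2) * ((p.1 j : ℝ) : ℂ))
        + ∫ p : R2n n, g p * phase n lam p ξ * Pop n j (⇑φ) (ξ + p.2) := by
    rw [hPW]
    simp_rw [heval]
    exact integral_add I2 I1
  constructor
  · -- the `P_j` relation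
    have hW2 : weylAct n lam (⇑g) (Pop n j ⇑φ) ξ
        = ∫ p : R2n n, g p * phase n lam p ξ * Pop n j (⇑φ) (ξ + p.2) := rfl
    rw [hW2, hsplit]
    have : weylAct n lam (fun p => ((lam * p.1 j : ℝ) : ℂ) * g p) (⇑φ) ξ
        = ∫ p : R2n n,
            ((lam * p.1 j : ℝ) : ℂ) * g p * phase n lam p ξ * φ (ξ + p.2) := rfl
    rw [this]
    rw [show Complex.I * ((∫ p : R2n n, g p * phase n lam p ξ * Pop n j (⇑φ) (ξ + p.2)) -
        ((∫ p : R2n n, g p * (Complex.I * (lam : ℂ)) * phase n lam p ξ * φ (ξ + p.2) *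
            ((p.1 j : ℝ) : ℂ))
          + ∫ p : R2n n, g p * phase n lam p ξ * Pop n j (⇑φ) (ξ + p.2)))
        = (-Complex.I) * ∫ p : R2n n, g p * (Complex.I * (lam : ℂ)) * phase n lam p ξ *
            φ (ξ + p.2) * ((p.1 j : ℝ) : ℂ) from by ring]
    rw [← integral_const_mul]
    refine integral_congr_ae (ae_of_all _ fun p => ?_)
    show ((lam * p.1 j : ℝ) : ℂ) * g p * phase n lam p ξ * φ (ξ + p.2)
        = -Complex.I * (g p * (Complex.I * (lam : ℂ)) * phase n lam p ξ * φ (ξ + p.2) *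
            ((p.1 j : ℝ) : ℂ))
    have hen : ((lam * p.1 j : ℝ) : ℂ) = (lam : ℂ) * ((p.1 j : ℝ) : ℂ) := by push_cast; ring
    rw [hen]
    linear_combination (↑lam * ((p.1 j : ℝ) : ℂ) * g p * phase n lam p ξ * φ (ξ + p.2)) *
      Complex.I_sq
  · -- the `Q_j` relation
    have hQ1 : weylAct n lam (⇑g) (Qop n j ⇑φ) ξ
        = ∫ p : R2n n, g p * phase n lam p ξ * ((((ξ + p.2) j : ℝ) : ℂ) * φ (ξ + p.2)) := rfl
    have hQ2 : Qop n j (weylAct n lam (⇑g) (⇑φ)) ξ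
        = ∫ p : R2n n, ((ξ j : ℝ) : ℂ) * (g p * phase n lam p ξ * φ (ξ + p.2)) := by
      unfold Qop
      rw [hW, integral_const_mul]
    have hLHS : weylAct n lam (fun p => ((p.2 j : ℝ) : ℂ) * g p) (⇑φ) ξ
        = ∫ p : R2n n, ((p.2 j : ℝ) : ℂ) * g p * phase n lam p ξ * φ (ξ + p.2) := rfl
    have hQsplit : weylAct n lam (⇑g) (Qop n j ⇑φ) ξ
        = (∫ p : R2n n, ((ξ j : ℝ) : ℂ) * (g p * phase n lam p ξ * φ (ξ + p.2)))
          + ∫ p : R2n n, ((p.2 j : ℝ) : ℂ) * g p * phase n lam p ξ * φ (ξ + p.2) := by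
      rw [hQ1]
      rw [show (fun p : R2n n => g p * phase n lam p ξ * ((((ξ + p.2) j : ℝ) : ℂ) * φ (ξ + p.2)))
          = fun p : R2n n => ((ξ j : ℝ) : ℂ) * (g p * phase n lam p ξ * φ (ξ + p.2))
            + ((p.2 j : ℝ) : ℂ) * g p * phase n lam p ξ * φ (ξ + p.2) from by
        funext p
        have : ((ξ + p.2) j : ℝ) = ξ j + p.2 j := rfl
        rw [this]
        push_cast
        ring]
      exact integral_add (I0.const_mul _) I3
    rw [hLHS, hQsplit, hQ2]
    ring


end QuantumHermite
end
end

section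
/- Let n ≥ 1, λ > 0, f ∈ 𝒮(ℝ^{2n}), and 1 ≤ j ≤ n. Define the first-order differential operators on ℝ^{2n}: Z_j^λ = (∂_{x_j} + (iλ/2)u_j) + i(∂_{u_j} − (iλ/2)x_j) and Z̄_j^λ = (∂_{x_j} + (iλ/2)u_j) − i(∂_{u_j} − (iλ/2)x_j), and on functions of ξ ∈ ℝ^n: A_j(λ)ψ = ∂ψ/∂ξ_j + λ ξ_j ψ and A_j*(λ)ψ = −∂ψ/∂ξ_j + λ ξ_j ψ. Then for every φ ∈ 𝒮(ℝ^n): π_λ(Z_j^λ f)φ = −i A_j(λ)(π_λ(f)φ) and π_λ(Z̄_j^λ f)φ = −i A_j*(λ)(π_λ(f)φ). -/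
open MeasureTheory Complex
open scoped Real ENNReal InnerProductSpace

noncomputable section

namespace QuantumHermite

/-- The operator `Z_j^λ = (∂_{x_j} + (iλ/2)u_j) + i(∂_{u_j} − (iλ/2)x_j)` applied to a
function on `ℝ^{2n}`. -/
def Zop (n : ℕ) (lam : ℝ) (j : Fin n) (f : R2n n → ℂ) (p : R2n n) : ℂ :=
  (fderiv ℝ f p ((Pi.single j 1 : Rn n), (0 : Rn n)) +
      Complex.I * (lam : ℂ) / 2 * ((p.2 j : ℝ) : ℂ) * f p) +
    Complex.I * (fderiv ℝ f p ((0 : Rn n), (Pi.single j 1 : Rn n)) -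
      Complex.I * (lam : ℂ) / 2 * ((p.1 j : ℝ) : ℂ) * f p)

/-- The operator `Z̄_j^λ = (∂_{x_j} + (iλ/2)u_j) − i(∂_{u_j} − (iλ/2)x_j)` applied to a
function on `ℝ^{2n}`. -/
def ZopBar (n : ℕ) (lam : ℝ) (j : Fin n) (f : R2n n → ℂ) (p : R2n n) : ℂ :=
  (fderiv ℝ f p ((Pi.single j 1 : Rn n), (0 : Rn n)) +
      Complex.I * (lam : ℂ) / 2 * ((p.2 j : ℝ) : ℂ) * f p) -
    Complex.I * (fderiv ℝ f p ((0 : Rn n), (Pi.single j 1 : Rn n)) -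
      Complex.I * (lam : ℂ) / 2 * ((p.1 j : ℝ) : ℂ) * f p)

/-- The phase of the Weyl transform kernel. -/
def ph (n : ℕ) (lam : ℝ) (ξ : Rn n) (p : R2n n) : ℂ :=
  Complex.I * (lam : ℂ) *
    (((∑ j, p.1 j * ξ j : ℝ) : ℂ) + ((∑ j, p.1 j * p.2 j : ℝ) : ℂ) / 2)

lemma norm_exp_ph (n : ℕ) (lam : ℝ) (ξ : Rn n) (p : R2n n) :
    ‖Complex.exp (ph n lam ξ p)‖ = 1 := by
  rw [Complex.norm_exp]
  have : (ph n lam ξ p).re = 0 := by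
    simp [ph, Complex.ext_iff, Complex.mul_re, Complex.mul_im, Complex.div_re, Complex.div_im]
  rw [this, Real.exp_zero]

/-- The CLM `w ↦ ↑(∑ k, p.1 k * w k)` on `Rn n`. -/
def Mlin (n : ℕ) (p : R2n n) : Rn n →L[ℝ] ℂ :=
  ∑ k, p.1 k • (Complex.ofRealCLM.comp (ContinuousLinearMap.proj k))

lemma Mlin_apply (n : ℕ) (p : R2n n) (w : Rn n) :
    Mlin n p w = ((∑ k, p.1 k * w k : ℝ) : ℂ) := by
  simp [Mlin, ContinuousLinearMap.sum_apply]

lemma norm_Mlin_le (n : ℕ) (p : R2n n) : ‖Mlin n p‖ ≤ n * ‖p‖ := by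
  have key : ∀ k : Fin n,
      ‖(p.1 k • (Complex.ofRealCLM.comp (ContinuousLinearMap.proj k)) : Rn n →L[ℝ] ℂ)‖ ≤ ‖p‖ := by
    intro k
    rw [norm_smul (p.1 k) (Complex.ofRealCLM.comp (ContinuousLinearMap.proj k) : Rn n →L[ℝ] ℂ)]
    have h1 : ‖p.1 k‖ ≤ ‖p‖ := by
      calc ‖p.1 k‖ ≤ ‖p.1‖ := norm_le_pi_norm p.1 k
        _ ≤ ‖p‖ := norm_fst_le p
    have h2 : ‖(Complex.ofRealCLM.comp (ContinuousLinearMap.proj k) : Rn n →L[ℝ] ℂ)‖ ≤ 1 := by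
      refine ContinuousLinearMap.opNorm_le_bound _ zero_le_one ?_
      intro w
      simp only [ContinuousLinearMap.comp_apply, ContinuousLinearMap.proj_apply,
        Complex.ofRealCLM_apply, Complex.norm_real, one_mul]
      exact norm_le_pi_norm w k
    calc ‖p.1 k‖ * ‖(Complex.ofRealCLM.comp (ContinuousLinearMap.proj k) : Rn n →L[ℝ] ℂ)‖
        ≤ ‖p‖ * 1 := mul_le_mul h1 h2 (norm_nonneg _) (norm_nonneg _)
      _ = ‖p‖ := mul_one _
  calc ‖Mlin n p‖ ≤ ∑ k, ‖(p.1 k • (Complex.ofRealCLM.comp (ContinuousLinearMap.proj k)) : Rn n →L[ℝ] ℂ)‖ :=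
        norm_sum_le _ _
    _ ≤ ∑ _k : Fin n, ‖p‖ := Finset.sum_le_sum fun k _ => key k
    _ = n * ‖p‖ := by simp [mul_comm]


/-- The kernel function `g_ξ(p) = e^{iλ(x·ξ+x·u/2)} φ(ξ+u)`. -/
def gfun (n : ℕ) (lam : ℝ) (φ : Rn n → ℂ) (ξ : Rn n) (p : R2n n) : ℂ :=
  Complex.exp (ph n lam ξ p) * φ (ξ + p.2)

/-- The derivative of `ξ ↦ g_ξ(p)`. -/
def Dxi (n : ℕ) (lam : ℝ) (φ : SchwartzMap (Rn n) ℂ) (ξ : Rn n) (p : R2n n) :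
    Rn n →L[ℝ] ℂ :=
  Complex.exp (ph n lam ξ p) • fderiv ℝ φ (ξ + p.2) +
    φ (ξ + p.2) • (Complex.exp (ph n lam ξ p) •
      ((Complex.I * (lam : ℂ)) • Mlin n p))

lemma hasFDerivAt_gfun_xi (n : ℕ) (lam : ℝ) (φ : SchwartzMap (Rn n) ℂ) (ξ : Rn n)
    (p : R2n n) :
    HasFDerivAt (fun ξ' => gfun n lam (⇑φ) ξ' p) (Dxi n lam φ ξ p) ξ := by
  have hLx : HasFDerivAt (fun ξ' : Rn n => (∑ k, p.1 k * ξ' k : ℝ))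
      (∑ k, p.1 k • ContinuousLinearMap.proj k : Rn n →L[ℝ] ℝ) ξ := by
    refine HasFDerivAt.congr_of_eventuallyEq
      (∑ k, p.1 k • ContinuousLinearMap.proj k : Rn n →L[ℝ] ℝ).hasFDerivAt ?_
    exact Filter.Eventually.of_forall fun w => by
      simp [ContinuousLinearMap.sum_apply]
  have h1 : HasFDerivAt (fun ξ' : Rn n => ((∑ k, p.1 k * ξ' k : ℝ) : ℂ))
      (Complex.ofRealCLM.comp (∑ k, p.1 k • ContinuousLinearMap.proj k : Rn n →L[ℝ] ℝ)) ξ :=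
    Complex.ofRealCLM.hasFDerivAt.comp ξ hLx
  have hM : Complex.ofRealCLM.comp (∑ k, p.1 k • ContinuousLinearMap.proj k : Rn n →L[ℝ] ℝ)
      = Mlin n p := by
    ext w
    rw [Mlin_apply]
    simp [ContinuousLinearMap.sum_apply]
  have h2 : HasFDerivAt (fun ξ' => ph n lam ξ' p)
      ((Complex.I * (lam : ℂ)) • Mlin n p) ξ := by
    have h := (h1.add_const (((∑ k, p.1 k * p.2 k : ℝ) : ℂ) / 2)).const_mul
      (Complex.I * (lam : ℂ))
    rw [hM] at h
    exact h
  have hsh : HasFDerivAt (fun ξ' : Rn n => ξ' + p.2) (ContinuousLinearMap.id ℝ (Rn n)) ξ :=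
    (hasFDerivAt_id ξ).add_const p.2
  have hphi : HasFDerivAt (fun ξ' : Rn n => φ (ξ' + p.2)) (fderiv ℝ φ (ξ + p.2)) ξ := by
    have h := (φ.differentiableAt.hasFDerivAt (x := ξ + p.2)).comp ξ hsh
    exact h
  exact h2.cexp.mul hphi


/-- The derivative of the linear part of the phase. -/
def LA (n : ℕ) (ξ : Rn n) : R2n n →L[ℝ] ℝ :=
  ∑ k, ξ k • ((ContinuousLinearMap.proj k).comp (ContinuousLinearMap.fst ℝ (Rn n) (Rn n)))

/-- The derivative of the bilinear part of the phase at `p`. -/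
def BB (n : ℕ) (p : R2n n) : R2n n →L[ℝ] ℝ :=
  ∑ k, (p.1 k • ((ContinuousLinearMap.proj k).comp (ContinuousLinearMap.snd ℝ (Rn n) (Rn n))) +
    p.2 k • ((ContinuousLinearMap.proj k).comp (ContinuousLinearMap.fst ℝ (Rn n) (Rn n))))

/-- The derivative of `p ↦ g_ξ(p)`. -/
def Dp (n : ℕ) (lam : ℝ) (φ : SchwartzMap (Rn n) ℂ) (ξ : Rn n) (p : R2n n) :
    R2n n →L[ℝ] ℂ :=
  Complex.exp (ph n lam ξ p) •
      ((fderiv ℝ φ (ξ + p.2)).comp (ContinuousLinearMap.snd ℝ (Rn n) (Rn n))) +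
    φ (ξ + p.2) • (Complex.exp (ph n lam ξ p) •
      ((Complex.I * (lam : ℂ)) • (Complex.ofRealCLM.comp (LA n ξ) +
        (2⁻¹ : ℂ) • Complex.ofRealCLM.comp (BB n p))))

lemma hasFDerivAt_gfun_p (n : ℕ) (lam : ℝ) (φ : SchwartzMap (Rn n) ℂ) (ξ : Rn n)
    (p : R2n n) :
    HasFDerivAt (gfun n lam (⇑φ) ξ) (Dp n lam φ ξ p) p := by
  have hLA : HasFDerivAt (fun q : R2n n => (∑ k, q.1 k * ξ k : ℝ)) (LA n ξ) p := by
    refine HasFDerivAt.congr_of_eventuallyEq (LA n ξ).hasFDerivAt ?_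
    exact Filter.Eventually.of_forall fun w => by
      simp [LA, ContinuousLinearMap.sum_apply, mul_comm]
  have hBB : HasFDerivAt (fun q : R2n n => (∑ k, q.1 k * q.2 k : ℝ)) (BB n p) p := by
    refine HasFDerivAt.fun_sum fun k _ => ?_
    have h1 : HasFDerivAt (fun q : R2n n => q.1 k)
        ((ContinuousLinearMap.proj k).comp (ContinuousLinearMap.fst ℝ (Rn n) (Rn n))) p :=
      ((ContinuousLinearMap.proj k).comp (ContinuousLinearMap.fst ℝ (Rn n) (Rn n))).hasFDerivAt
    have h2 : HasFDerivAt (fun q : R2n n => q.2 k)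
        ((ContinuousLinearMap.proj k).comp (ContinuousLinearMap.snd ℝ (Rn n) (Rn n))) p :=
      ((ContinuousLinearMap.proj k).comp (ContinuousLinearMap.snd ℝ (Rn n) (Rn n))).hasFDerivAt
    exact h1.mul h2
  have h1C : HasFDerivAt (fun q : R2n n => ((∑ k, q.1 k * ξ k : ℝ) : ℂ))
      (Complex.ofRealCLM.comp (LA n ξ)) p := Complex.ofRealCLM.hasFDerivAt.comp p hLA
  have h2C : HasFDerivAt (fun q : R2n n => ((∑ k, q.1 k * q.2 k : ℝ) : ℂ))
      (Complex.ofRealCLM.comp (BB n p)) p := Complex.ofRealCLM.hasFDerivAt.comp p hBB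
  have hph : HasFDerivAt (fun q : R2n n => ph n lam ξ q)
      ((Complex.I * (lam : ℂ)) • (Complex.ofRealCLM.comp (LA n ξ) +
        (2⁻¹ : ℂ) • Complex.ofRealCLM.comp (BB n p))) p := by
    have h := (h1C.add (h2C.const_mul (2⁻¹ : ℂ))).const_mul (Complex.I * (lam : ℂ))
    refine HasFDerivAt.congr_of_eventuallyEq h ?_
    exact Filter.Eventually.of_forall fun q => by
      simp only [ph, Pi.add_apply]
      ring
  have hsh : HasFDerivAt (fun q : R2n n => ξ + q.2)
      (ContinuousLinearMap.snd ℝ (Rn n) (Rn n)) p :=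
    (ContinuousLinearMap.snd ℝ (Rn n) (Rn n)).hasFDerivAt.const_add ξ
  have hphi : HasFDerivAt (fun q : R2n n => φ (ξ + q.2))
      ((fderiv ℝ φ (ξ + p.2)).comp (ContinuousLinearMap.snd ℝ (Rn n) (Rn n))) p :=
    (φ.differentiableAt.hasFDerivAt (x := ξ + p.2)).comp p hsh
  exact hph.cexp.mul hphi


lemma Dxi_apply (n : ℕ) (lam : ℝ) (φ : SchwartzMap (Rn n) ℂ) (ξ : Rn n) (p : R2n n)
    (j : Fin n) :
    Dxi n lam φ ξ p (Pi.single j 1) =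
      Complex.exp (ph n lam ξ p) * fderiv ℝ φ (ξ + p.2) (Pi.single j 1) +
        Complex.I * (lam : ℂ) * ((p.1 j : ℝ) : ℂ) * gfun n lam (⇑φ) ξ p := by
  simp only [Dxi, gfun, ContinuousLinearMap.add_apply, ContinuousLinearMap.smul_apply,
    Mlin_apply, smul_eq_mul]
  have : (∑ k, p.1 k * (Pi.single j 1 : Rn n) k : ℝ) = p.1 j := by
    simp [Pi.single_apply, mul_ite, Finset.sum_ite_eq']
  rw [this]
  ring

lemma Dp_apply_fst (n : ℕ) (lam : ℝ) (φ : SchwartzMap (Rn n) ℂ) (ξ : Rn n) (p : R2n n)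
    (j : Fin n) :
    Dp n lam φ ξ p ((Pi.single j 1 : Rn n), (0 : Rn n)) =
      Complex.I * (lam : ℂ) * (((ξ j : ℝ) : ℂ) + ((p.2 j : ℝ) : ℂ) / 2) *
        gfun n lam (⇑φ) ξ p := by
  have hLA : LA n ξ ((Pi.single j 1 : Rn n), (0 : Rn n)) = ξ j := by
    simp [LA, ContinuousLinearMap.sum_apply, Pi.single_apply, mul_ite, Finset.sum_ite_eq']
  have hBB : BB n p ((Pi.single j 1 : Rn n), (0 : Rn n)) = p.2 j := by
    simp [BB, ContinuousLinearMap.sum_apply, Pi.single_apply, mul_ite, Finset.sum_ite_eq']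
  simp only [Dp, gfun, ContinuousLinearMap.add_apply, ContinuousLinearMap.smul_apply,
    ContinuousLinearMap.comp_apply, ContinuousLinearMap.coe_snd',
    Complex.ofRealCLM_apply, hLA, hBB, smul_eq_mul, map_zero]
  ring

lemma Dp_apply_snd (n : ℕ) (lam : ℝ) (φ : SchwartzMap (Rn n) ℂ) (ξ : Rn n) (p : R2n n)
    (j : Fin n) :
    Dp n lam φ ξ p ((0 : Rn n), (Pi.single j 1 : Rn n)) =
      Complex.I * (lam : ℂ) * (((p.1 j : ℝ) : ℂ) / 2) * gfun n lam (⇑φ) ξ p +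
        Complex.exp (ph n lam ξ p) * fderiv ℝ φ (ξ + p.2) (Pi.single j 1) := by
  have hLA : LA n ξ ((0 : Rn n), (Pi.single j 1 : Rn n)) = 0 := by
    simp [LA, ContinuousLinearMap.sum_apply]
  have hBB : BB n p ((0 : Rn n), (Pi.single j 1 : Rn n)) = p.1 j := by
    simp [BB, ContinuousLinearMap.sum_apply, Pi.single_apply, mul_ite, Finset.sum_ite_eq']
  simp only [Dp, gfun, ContinuousLinearMap.add_apply, ContinuousLinearMap.smul_apply,
    ContinuousLinearMap.comp_apply, ContinuousLinearMap.coe_snd',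
    Complex.ofRealCLM_apply, hLA, hBB, smul_eq_mul]
  push_cast
  ring


lemma continuous_ph (n : ℕ) (lam : ℝ) (ξ : Rn n) : Continuous (fun p => ph n lam ξ p) := by
  have h1 : Continuous (fun p : R2n n => (∑ k, p.1 k * ξ k : ℝ)) :=
    continuous_finset_sum _ fun k _ => ((continuous_apply k).comp continuous_fst).mul
      continuous_const
  have h2 : Continuous (fun p : R2n n => (∑ k, p.1 k * p.2 k : ℝ)) :=
    continuous_finset_sum _ fun k _ => ((continuous_apply k).comp continuous_fst).mul
      ((continuous_apply k).comp continuous_snd)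
  exact continuous_const.mul ((Complex.continuous_ofReal.comp h1).add
    ((Complex.continuous_ofReal.comp h2).div_const 2))

lemma continuous_gfun (n : ℕ) (lam : ℝ) (φ : SchwartzMap (Rn n) ℂ) (ξ : Rn n) :
    Continuous (fun p => gfun n lam (⇑φ) ξ p) :=
  (Complex.continuous_exp.comp (continuous_ph n lam ξ)).mul
    (φ.continuous.comp (continuous_const.add continuous_snd))

lemma continuous_fderiv_phi (n : ℕ) (φ : SchwartzMap (Rn n) ℂ) (ξ : Rn n) :
    Continuous (fun p : R2n n => fderiv ℝ (⇑φ) (ξ + p.2)) := by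
  have : (fun p : R2n n => fderiv ℝ (⇑φ) (ξ + p.2)) =
      (fun p : R2n n => SchwartzMap.fderivCLM ℝ (Rn n) ℂ φ (ξ + p.2)) := by
    funext p; rw [SchwartzMap.fderivCLM_apply]
  rw [this]
  exact (SchwartzMap.fderivCLM ℝ (Rn n) ℂ φ).continuous.comp (continuous_const.add continuous_snd)

lemma continuous_Mlin (n : ℕ) : Continuous (fun p : R2n n => Mlin n p) :=
  continuous_finset_sum _ fun k _ =>
    ((continuous_apply k).comp continuous_fst).smul continuous_const

lemma continuous_Dxi (n : ℕ) (lam : ℝ) (φ : SchwartzMap (Rn n) ℂ) (ξ : Rn n) :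
    Continuous (fun p : R2n n => Dxi n lam φ ξ p) := by
  refine Continuous.add ?_ ?_
  · exact (Complex.continuous_exp.comp (continuous_ph n lam ξ)).smul
      (continuous_fderiv_phi n φ ξ)
  · exact (φ.continuous.comp (continuous_const.add continuous_snd)).smul
      ((Complex.continuous_exp.comp (continuous_ph n lam ξ)).smul
        ((continuous_Mlin n).const_smul (Complex.I * (lam : ℂ))))

lemma norm_gfun_le (n : ℕ) (lam : ℝ) (φ : SchwartzMap (Rn n) ℂ) (ξ : Rn n) (p : R2n n) :
    ‖gfun n lam (⇑φ) ξ p‖ ≤ (SchwartzMap.seminorm ℝ 0 0) φ := by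
  rw [gfun, norm_mul, norm_exp_ph, one_mul]
  exact φ.norm_le_seminorm ℝ _

lemma norm_fderiv_phi_le (n : ℕ) (φ : SchwartzMap (Rn n) ℂ) (y : Rn n) :
    ‖fderiv ℝ (⇑φ) y‖ ≤ (SchwartzMap.seminorm ℝ 0 0) (SchwartzMap.fderivCLM ℝ (Rn n) ℂ φ) := by
  rw [← SchwartzMap.fderivCLM_apply (𝕜 := ℝ)]
  exact (SchwartzMap.fderivCLM ℝ (Rn n) ℂ φ).norm_le_seminorm ℝ _

instance volumeHaarR2n (n : ℕ) : (volume : Measure (R2n n)).IsAddHaarMeasure :=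
  MeasureTheory.Measure.prod.instIsAddHaarMeasure _ _

lemma norm_Dxi_le (n : ℕ) (lam : ℝ) (φ : SchwartzMap (Rn n) ℂ) (ξ : Rn n) (p : R2n n) :
    ‖Dxi n lam φ ξ p‖ ≤
      (SchwartzMap.seminorm ℝ 0 0) (SchwartzMap.fderivCLM ℝ (Rn n) ℂ φ) +
        (SchwartzMap.seminorm ℝ 0 0) φ * (|lam| * (n * ‖p‖)) := by
  refine (norm_add_le _ _).trans (add_le_add ?_ ?_)
  · rw [norm_smul (Complex.exp (ph n lam ξ p)) (fderiv ℝ (⇑φ) (ξ + p.2)), norm_exp_ph, one_mul]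
    exact norm_fderiv_phi_le n φ _
  · rw [norm_smul (φ (ξ + p.2)) (Complex.exp (ph n lam ξ p) • (Complex.I * (lam : ℂ)) • Mlin n p),
      norm_smul (Complex.exp (ph n lam ξ p)) ((Complex.I * (lam : ℂ)) • Mlin n p), norm_exp_ph,
      one_mul, norm_smul (Complex.I * (lam : ℂ)) (Mlin n p)]
    have h1 : ‖φ (ξ + p.2)‖ ≤ (SchwartzMap.seminorm ℝ 0 0) φ := φ.norm_le_seminorm ℝ _
    have h2 : ‖Complex.I * (lam : ℂ)‖ = |lam| := by
      simp
    rw [h2]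
    have h3 : ‖Mlin n p‖ ≤ n * ‖p‖ := norm_Mlin_le n p
    calc ‖φ (ξ + p.2)‖ * (|lam| * ‖Mlin n p‖)
        ≤ (SchwartzMap.seminorm ℝ 0 0) φ * (|lam| * (n * ‖p‖)) := by
          apply mul_le_mul h1 _ (by positivity) (apply_nonneg _ _)
          exact mul_le_mul_of_nonneg_left h3 (abs_nonneg _)

lemma integrable_of_bound {n : ℕ} {V W : Type*} [NormedAddCommGroup V] [NormedSpace ℝ V]
    [NormedAddCommGroup W] (h : SchwartzMap (R2n n) V) (F : R2n n → W)
    (hm : AEStronglyMeasurable F (volume : Measure (R2n n))) (a b : ℝ)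
    (hb : ∀ p, ‖F p‖ ≤ a * ‖h p‖ + b * (‖p‖ * ‖h p‖)) :
    Integrable F (volume : Measure (R2n n)) := by
  have h1 : Integrable (fun p : R2n n => a * ‖h p‖) volume := h.integrable.norm.const_mul a
  have h2 : Integrable (fun p : R2n n => b * (‖p‖ * ‖h p‖)) volume := by
    simpa using (h.integrable_pow_mul volume 1).const_mul b
  exact (h1.add h2).mono' hm (Filter.Eventually.of_forall hb)



section Main

variable (n : ℕ) (lam : ℝ) (f : SchwartzMap (R2n n) ℂ) (φ : SchwartzMap (Rn n) ℂ)
  (ξ : Rn n) (j : Fin n)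

lemma weylAct_funeq (h : R2n n → ℂ) :
    weylAct n lam h (⇑φ) = fun ξ' => ∫ p, h p * gfun n lam (⇑φ) ξ' p := by
  funext ξ'
  simp only [weylAct, gfun, ph, mul_assoc]

-- basic integrability facts
lemma int_fg : Integrable (fun p => (⇑f) p * gfun n lam (⇑φ) ξ p) volume := by
  refine integrable_of_bound f _ ?_ ((SchwartzMap.seminorm ℝ 0 0) φ) 0 ?_
  · exact (f.continuous.mul (continuous_gfun n lam φ ξ)).aestronglyMeasurable
  · intro p
    rw [norm_mul]
    have := norm_gfun_le n lam φ ξ p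
    nlinarith [norm_nonneg ((⇑f) p), norm_nonneg (gfun n lam (⇑φ) ξ p)]

lemma int_x_fg : Integrable
    (fun p => ((p.1 j : ℝ) : ℂ) * ((⇑f) p * gfun n lam (⇑φ) ξ p)) volume := by
  refine integrable_of_bound f _ ?_ 0 ((SchwartzMap.seminorm ℝ 0 0) φ) ?_
  · exact ((Complex.continuous_ofReal.comp ((continuous_apply j).comp continuous_fst)).mul
      (f.continuous.mul (continuous_gfun n lam φ ξ))).aestronglyMeasurable
  · intro p
    rw [norm_mul, norm_mul]
    have h1 : ‖((p.1 j : ℝ) : ℂ)‖ ≤ ‖p‖ := by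
      rw [Complex.norm_real]
      calc ‖p.1 j‖ ≤ ‖p.1‖ := norm_le_pi_norm p.1 j
        _ ≤ ‖p‖ := norm_fst_le p
    have h2 := norm_gfun_le n lam φ ξ p
    calc ‖((p.1 j : ℝ) : ℂ)‖ * (‖(⇑f) p‖ * ‖gfun n lam (⇑φ) ξ p‖)
        ≤ ‖p‖ * (‖(⇑f) p‖ * (SchwartzMap.seminorm ℝ 0 0) φ) :=
          mul_le_mul h1 (mul_le_mul_of_nonneg_left h2 (norm_nonneg _)) (by positivity)
            (norm_nonneg p)
      _ = 0 * ‖(⇑f) p‖ + (SchwartzMap.seminorm ℝ 0 0) φ * (‖p‖ * ‖(⇑f) p‖) := by ring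

lemma int_u_fg : Integrable
    (fun p => ((p.2 j : ℝ) : ℂ) * ((⇑f) p * gfun n lam (⇑φ) ξ p)) volume := by
  refine integrable_of_bound f _ ?_ 0 ((SchwartzMap.seminorm ℝ 0 0) φ) ?_
  · exact ((Complex.continuous_ofReal.comp ((continuous_apply j).comp continuous_snd)).mul
      (f.continuous.mul (continuous_gfun n lam φ ξ))).aestronglyMeasurable
  · intro p
    rw [norm_mul, norm_mul]
    have h1 : ‖((p.2 j : ℝ) : ℂ)‖ ≤ ‖p‖ := by
      rw [Complex.norm_real]
      calc ‖p.2 j‖ ≤ ‖p.2‖ := norm_le_pi_norm p.2 j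
        _ ≤ ‖p‖ := norm_snd_le p
    have h2 := norm_gfun_le n lam φ ξ p
    calc ‖((p.2 j : ℝ) : ℂ)‖ * (‖(⇑f) p‖ * ‖gfun n lam (⇑φ) ξ p‖)
        ≤ ‖p‖ * (‖(⇑f) p‖ * (SchwartzMap.seminorm ℝ 0 0) φ) :=
          mul_le_mul h1 (mul_le_mul_of_nonneg_left h2 (norm_nonneg _)) (by positivity)
            (norm_nonneg p)
      _ = 0 * ‖(⇑f) p‖ + (SchwartzMap.seminorm ℝ 0 0) φ * (‖p‖ * ‖(⇑f) p‖) := by ring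

lemma int_f_dphi : Integrable (fun p : R2n n =>
    (⇑f) p * (Complex.exp (ph n lam ξ p) *
      fderiv ℝ (⇑φ) (ξ + p.2) (Pi.single j 1))) volume := by
  refine integrable_of_bound f _ ?_
    ((SchwartzMap.seminorm ℝ 0 0) (SchwartzMap.fderivCLM ℝ (Rn n) ℂ φ) * ‖(Pi.single j 1 : Rn n)‖) 0 ?_
  · refine (f.continuous.mul ((Complex.continuous_exp.comp (continuous_ph n lam ξ)).mul
      ?_)).aestronglyMeasurable
    exact (ContinuousLinearMap.apply ℝ ℂ (Pi.single j 1 : Rn n)).continuous.comp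
      (continuous_fderiv_phi n φ ξ)
  · intro p
    rw [norm_mul, norm_mul, norm_exp_ph, one_mul]
    have h1 : ‖fderiv ℝ (⇑φ) (ξ + p.2) (Pi.single j 1)‖ ≤
        (SchwartzMap.seminorm ℝ 0 0) (SchwartzMap.fderivCLM ℝ (Rn n) ℂ φ) * ‖(Pi.single j 1 : Rn n)‖ :=
      (ContinuousLinearMap.le_opNorm _ _).trans
        (mul_le_mul_of_nonneg_right (norm_fderiv_phi_le n φ _) (norm_nonneg _))
    calc ‖(⇑f) p‖ * ‖fderiv ℝ (⇑φ) (ξ + p.2) (Pi.single j 1)‖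
        ≤ ‖(⇑f) p‖ * ((SchwartzMap.seminorm ℝ 0 0) (SchwartzMap.fderivCLM ℝ (Rn n) ℂ φ) *
            ‖(Pi.single j 1 : Rn n)‖) := mul_le_mul_of_nonneg_left h1 (norm_nonneg _)
      _ = (SchwartzMap.seminorm ℝ 0 0) (SchwartzMap.fderivCLM ℝ (Rn n) ℂ φ) * ‖(Pi.single j 1 : Rn n)‖ *
            ‖(⇑f) p‖ + 0 * (‖p‖ * ‖(⇑f) p‖) := by ring

lemma int_df_g (v : R2n n) : Integrable
    (fun p => fderiv ℝ (⇑f) p v * gfun n lam (⇑φ) ξ p) volume := by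
  refine integrable_of_bound (SchwartzMap.fderivCLM ℝ (R2n n) ℂ f) _ ?_
    ((SchwartzMap.seminorm ℝ 0 0) φ * ‖v‖) 0 ?_
  · refine Continuous.aestronglyMeasurable (Continuous.mul ?_ (continuous_gfun n lam φ ξ))
    have : (fun p : R2n n => fderiv ℝ (⇑f) p v) =
        fun p => SchwartzMap.fderivCLM ℝ (R2n n) ℂ f p v := by
      funext p; rw [SchwartzMap.fderivCLM_apply]
    rw [this]
    exact (ContinuousLinearMap.apply ℝ ℂ v).continuous.comp (SchwartzMap.fderivCLM ℝ (R2n n) ℂ f).continuous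
  · intro p
    rw [norm_mul]
    have h1 : ‖fderiv ℝ (⇑f) p v‖ ≤ ‖(SchwartzMap.fderivCLM ℝ (R2n n) ℂ f) p‖ * ‖v‖ := by
      rw [SchwartzMap.fderivCLM_apply]
      exact ContinuousLinearMap.le_opNorm _ _
    have h2 := norm_gfun_le n lam φ ξ p
    calc ‖fderiv ℝ (⇑f) p v‖ * ‖gfun n lam (⇑φ) ξ p‖
        ≤ (‖(SchwartzMap.fderivCLM ℝ (R2n n) ℂ f) p‖ * ‖v‖) * (SchwartzMap.seminorm ℝ 0 0) φ :=
          mul_le_mul h1 h2 (norm_nonneg _) (by positivity)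
      _ = (SchwartzMap.seminorm ℝ 0 0) φ * ‖v‖ * ‖(SchwartzMap.fderivCLM ℝ (R2n n) ℂ f) p‖ +
            0 * (‖p‖ * ‖(SchwartzMap.fderivCLM ℝ (R2n n) ℂ f) p‖) := by ring

lemma int_f_smul_Dxi : Integrable (fun p => (⇑f) p • Dxi n lam φ ξ p) volume := by
  refine integrable_of_bound f _ ?_
    ((SchwartzMap.seminorm ℝ 0 0) (SchwartzMap.fderivCLM ℝ (Rn n) ℂ φ))
    ((SchwartzMap.seminorm ℝ 0 0) φ * (|lam| * n)) ?_
  · exact (f.continuous.smul (continuous_Dxi n lam φ ξ)).aestronglyMeasurable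
  · intro p
    rw [norm_smul ((⇑f) p) (Dxi n lam φ ξ p)]
    have h := norm_Dxi_le n lam φ ξ p
    calc ‖(⇑f) p‖ * ‖Dxi n lam φ ξ p‖
        ≤ ‖(⇑f) p‖ * ((SchwartzMap.seminorm ℝ 0 0) (SchwartzMap.fderivCLM ℝ (Rn n) ℂ φ) +
            (SchwartzMap.seminorm ℝ 0 0) φ * (|lam| * (n * ‖p‖))) :=
          mul_le_mul_of_nonneg_left h (norm_nonneg _)
      _ = (SchwartzMap.seminorm ℝ 0 0) (SchwartzMap.fderivCLM ℝ (Rn n) ℂ φ) * ‖(⇑f) p‖ +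
            (SchwartzMap.seminorm ℝ 0 0) φ * (|lam| * n) * (‖p‖ * ‖(⇑f) p‖) := by ring

lemma integral_four {A B C D : R2n n → ℂ} (hA : Integrable A (volume : Measure (R2n n)))
    (hB : Integrable B volume) (hC : Integrable C volume) (hD : Integrable D volume) :
    ∫ p, (A p + B p + C p + D p) =
      (∫ p, A p) + (∫ p, B p) + (∫ p, C p) + ∫ p, D p := by
  have hAB : Integrable (fun p => A p + B p) volume := hA.add hB
  have hABC : Integrable (fun p => A p + B p + C p) volume := hAB.add hC
  rw [integral_add hABC hD, integral_add hAB hC, integral_add hA hB]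

lemma hasFDerivAt_weyl :
    HasFDerivAt (fun ξ' => ∫ p, (⇑f) p * gfun n lam (⇑φ) ξ' p)
      (∫ p, (⇑f) p • Dxi n lam φ ξ p) ξ := by
  refine hasFDerivAt_integral_of_dominated_of_fderiv_le
    (F' := fun ξ' p => (⇑f) p • Dxi n lam φ ξ' p)
    (bound := fun p => (SchwartzMap.seminorm ℝ 0 0) (SchwartzMap.fderivCLM ℝ (Rn n) ℂ φ) * ‖(⇑f) p‖ +
      (SchwartzMap.seminorm ℝ 0 0) φ * (|lam| * n) * (‖p‖ * ‖(⇑f) p‖))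
    (Metric.ball_mem_nhds ξ one_pos) ?_ ?_ ?_ ?_ ?_ ?_
  · exact Filter.Eventually.of_forall fun ξ' =>
      (f.continuous.mul (continuous_gfun n lam φ ξ')).aestronglyMeasurable
  · exact int_fg n lam f φ ξ
  · exact (f.continuous.smul (continuous_Dxi n lam φ ξ)).aestronglyMeasurable
  · refine Filter.Eventually.of_forall fun p ξ' _ => ?_
    rw [norm_smul ((⇑f) p) (Dxi n lam φ ξ' p)]
    calc ‖(⇑f) p‖ * ‖Dxi n lam φ ξ' p‖
        ≤ ‖(⇑f) p‖ * ((SchwartzMap.seminorm ℝ 0 0) (SchwartzMap.fderivCLM ℝ (Rn n) ℂ φ) +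
            (SchwartzMap.seminorm ℝ 0 0) φ * (|lam| * (n * ‖p‖))) :=
          mul_le_mul_of_nonneg_left (norm_Dxi_le n lam φ ξ' p) (norm_nonneg _)
      _ = (SchwartzMap.seminorm ℝ 0 0) (SchwartzMap.fderivCLM ℝ (Rn n) ℂ φ) * ‖(⇑f) p‖ +
            (SchwartzMap.seminorm ℝ 0 0) φ * (|lam| * n) * (‖p‖ * ‖(⇑f) p‖) := by ring
  · have h1 : Integrable (fun p : R2n n =>
        (SchwartzMap.seminorm ℝ 0 0) (SchwartzMap.fderivCLM ℝ (Rn n) ℂ φ) * ‖(⇑f) p‖) volume :=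
      f.integrable.norm.const_mul _
    have h2 : Integrable (fun p : R2n n =>
        (SchwartzMap.seminorm ℝ 0 0) φ * (|lam| * n) * (‖p‖ * ‖(⇑f) p‖)) volume := by
      simpa using (f.integrable_pow_mul volume 1).const_mul
        ((SchwartzMap.seminorm ℝ 0 0) φ * (|lam| * n))
    exact h1.add h2
  · refine Filter.Eventually.of_forall fun p ξ' _ => ?_
    exact (hasFDerivAt_gfun_xi n lam φ ξ' p).const_mul ((⇑f) p)

lemma fderiv_weyl_apply :
    fderiv ℝ (weylAct n lam (⇑f) (⇑φ)) ξ (Pi.single j 1) =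
      (∫ p, (⇑f) p * (Complex.exp (ph n lam ξ p) *
        fderiv ℝ (⇑φ) (ξ + p.2) (Pi.single j 1))) +
      Complex.I * (lam : ℂ) *
        ∫ p, ((p.1 j : ℝ) : ℂ) * ((⇑f) p * gfun n lam (⇑φ) ξ p) := by
  rw [weylAct_funeq n lam φ (⇑f), (hasFDerivAt_weyl n lam f φ ξ).fderiv,
    ContinuousLinearMap.integral_apply (int_f_smul_Dxi n lam f φ ξ)]
  have hfun : (fun p => ((⇑f) p • Dxi n lam φ ξ p) (Pi.single j 1)) = fun p =>
      (⇑f) p * (Complex.exp (ph n lam ξ p) * fderiv ℝ (⇑φ) (ξ + p.2) (Pi.single j 1)) +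
        Complex.I * (lam : ℂ) * (((p.1 j : ℝ) : ℂ) * ((⇑f) p * gfun n lam (⇑φ) ξ p)) := by
    funext p
    rw [ContinuousLinearMap.smul_apply, Dxi_apply]
    simp only [smul_eq_mul]
    ring
  rw [hfun, integral_add (int_f_dphi n lam f φ ξ j) ((int_x_fg n lam f φ ξ j).const_mul _),
    integral_const_mul]

lemma ibp_fst :
    ∫ p, fderiv ℝ (⇑f) p ((Pi.single j 1 : Rn n), (0 : Rn n)) * gfun n lam (⇑φ) ξ p =
      -(Complex.I * (lam : ℂ) * ((ξ j : ℝ) : ℂ) *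
          (∫ p, (⇑f) p * gfun n lam (⇑φ) ξ p) +
        Complex.I * (lam : ℂ) / 2 *
          ∫ p, ((p.2 j : ℝ) : ℂ) * ((⇑f) p * gfun n lam (⇑φ) ξ p)) := by
  have hgdiff : Differentiable ℝ (gfun n lam (⇑φ) ξ) := fun p =>
    (hasFDerivAt_gfun_p n lam φ ξ p).differentiableAt
  have hDg : (fun p => (⇑f) p * fderiv ℝ (gfun n lam (⇑φ) ξ) p
      ((Pi.single j 1 : Rn n), (0 : Rn n))) = fun p =>
        Complex.I * (lam : ℂ) * ((ξ j : ℝ) : ℂ) * ((⇑f) p * gfun n lam (⇑φ) ξ p) +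
          Complex.I * (lam : ℂ) / 2 *
            (((p.2 j : ℝ) : ℂ) * ((⇑f) p * gfun n lam (⇑φ) ξ p)) := by
    funext p
    rw [(hasFDerivAt_gfun_p n lam φ ξ p).fderiv, Dp_apply_fst]
    ring
  have hint : Integrable (fun p => (⇑f) p * fderiv ℝ (gfun n lam (⇑φ) ξ) p
      ((Pi.single j 1 : Rn n), (0 : Rn n))) volume := by
    rw [hDg]
    exact ((int_fg n lam f φ ξ).const_mul _).add ((int_u_fg n lam f φ ξ j).const_mul _)
  have e := integral_mul_fderiv_eq_neg_fderiv_mul_of_integrable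
    (int_df_g n lam f φ ξ ((Pi.single j 1 : Rn n), (0 : Rn n))) hint (int_fg n lam f φ ξ)
    (fun x _ => f.differentiable x) (fun x _ => hgdiff x)
  rw [hDg, integral_add ((int_fg n lam f φ ξ).const_mul _)
    ((int_u_fg n lam f φ ξ j).const_mul _), integral_const_mul, integral_const_mul] at e
  rw [e, neg_neg]

lemma ibp_snd :
    ∫ p, fderiv ℝ (⇑f) p ((0 : Rn n), (Pi.single j 1 : Rn n)) * gfun n lam (⇑φ) ξ p =
      -(Complex.I * (lam : ℂ) / 2 *
          (∫ p, ((p.1 j : ℝ) : ℂ) * ((⇑f) p * gfun n lam (⇑φ) ξ p)) +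
        ∫ p, (⇑f) p * (Complex.exp (ph n lam ξ p) *
          fderiv ℝ (⇑φ) (ξ + p.2) (Pi.single j 1))) := by
  have hgdiff : Differentiable ℝ (gfun n lam (⇑φ) ξ) := fun p =>
    (hasFDerivAt_gfun_p n lam φ ξ p).differentiableAt
  have hDg : (fun p => (⇑f) p * fderiv ℝ (gfun n lam (⇑φ) ξ) p
      ((0 : Rn n), (Pi.single j 1 : Rn n))) = fun p =>
        Complex.I * (lam : ℂ) / 2 *
            (((p.1 j : ℝ) : ℂ) * ((⇑f) p * gfun n lam (⇑φ) ξ p)) +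
          (⇑f) p * (Complex.exp (ph n lam ξ p) *
            fderiv ℝ (⇑φ) (ξ + p.2) (Pi.single j 1)) := by
    funext p
    rw [(hasFDerivAt_gfun_p n lam φ ξ p).fderiv, Dp_apply_snd]
    ring
  have hint : Integrable (fun p => (⇑f) p * fderiv ℝ (gfun n lam (⇑φ) ξ) p
      ((0 : Rn n), (Pi.single j 1 : Rn n))) volume := by
    rw [hDg]
    exact ((int_x_fg n lam f φ ξ j).const_mul _).add (int_f_dphi n lam f φ ξ j)
  have e := integral_mul_fderiv_eq_neg_fderiv_mul_of_integrable
    (int_df_g n lam f φ ξ ((0 : Rn n), (Pi.single j 1 : Rn n))) hint (int_fg n lam f φ ξ)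
    (fun x _ => f.differentiable x) (fun x _ => hgdiff x)
  rw [hDg, integral_add ((int_x_fg n lam f φ ξ j).const_mul _) (int_f_dphi n lam f φ ξ j),
    integral_const_mul] at e
  rw [e, neg_neg]

end Main

/-- `π_λ(Z_j^λ f) = −i A_j(λ) π_λ(f)` and `π_λ(Z̄_j^λ f) = −i A_j*(λ) π_λ(f)`,
applied to a Schwartz function. -/
theorem weyl_Z_relations (n : ℕ) (hn : 1 ≤ n) (lam : ℝ) (hlam : 0 < lam)
    (f : SchwartzMap (R2n n) ℂ) (j : Fin n) (φ : SchwartzMap (Rn n) ℂ) (ξ : Rn n) :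
    weylAct n lam (Zop n lam j ⇑f) (⇑φ) ξ =
      -Complex.I * Aop n lam j (weylAct n lam (⇑f) (⇑φ)) ξ ∧
    weylAct n lam (ZopBar n lam j ⇑f) (⇑φ) ξ =
      -Complex.I * AopStar n lam j (weylAct n lam (⇑f) (⇑φ)) ξ := by

  have h1 : Integrable (fun p => fderiv ℝ (⇑f) p ((Pi.single j 1 : Rn n), (0 : Rn n)) *
      gfun n lam (⇑φ) ξ p) volume := int_df_g n lam f φ ξ _
  have h2 : Integrable (fun p => Complex.I * (lam : ℂ) / 2 *
      (((p.2 j : ℝ) : ℂ) * ((⇑f) p * gfun n lam (⇑φ) ξ p))) volume :=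
    (int_u_fg n lam f φ ξ j).const_mul _
  have h3 : Integrable (fun p => Complex.I *
      (fderiv ℝ (⇑f) p ((0 : Rn n), (Pi.single j 1 : Rn n)) * gfun n lam (⇑φ) ξ p)) volume :=
    (int_df_g n lam f φ ξ _).const_mul _
  have h4p : Integrable (fun p => (Complex.I * -(Complex.I * (lam : ℂ) / 2)) *
      (((p.1 j : ℝ) : ℂ) * ((⇑f) p * gfun n lam (⇑φ) ξ p))) volume :=
    (int_x_fg n lam f φ ξ j).const_mul _
  have h4m : Integrable (fun p => (-Complex.I * -(Complex.I * (lam : ℂ) / 2)) *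
      (((p.1 j : ℝ) : ℂ) * ((⇑f) p * gfun n lam (⇑φ) ξ p))) volume :=
    (int_x_fg n lam f φ ξ j).const_mul _
  have h3m : Integrable (fun p => -Complex.I *
      (fderiv ℝ (⇑f) p ((0 : Rn n), (Pi.single j 1 : Rn n)) * gfun n lam (⇑φ) ξ p)) volume :=
    (int_df_g n lam f φ ξ _).const_mul _
  constructor
  · have hsplit : (fun p => Zop n lam j (⇑f) p * gfun n lam (⇑φ) ξ p) = fun p =>
        fderiv ℝ (⇑f) p ((Pi.single j 1 : Rn n), (0 : Rn n)) * gfun n lam (⇑φ) ξ p +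
          Complex.I * (lam : ℂ) / 2 * (((p.2 j : ℝ) : ℂ) * ((⇑f) p * gfun n lam (⇑φ) ξ p)) +
          Complex.I * (fderiv ℝ (⇑f) p ((0 : Rn n), (Pi.single j 1 : Rn n)) *
            gfun n lam (⇑φ) ξ p) +
          (Complex.I * -(Complex.I * (lam : ℂ) / 2)) *
            (((p.1 j : ℝ) : ℂ) * ((⇑f) p * gfun n lam (⇑φ) ξ p)) := by
      funext p
      simp only [Zop]
      ring
    rw [show weylAct n lam (Zop n lam j ⇑f) (⇑φ) ξ =
        ∫ p, Zop n lam j (⇑f) p * gfun n lam (⇑φ) ξ p from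
      congrFun (weylAct_funeq n lam φ (Zop n lam j ⇑f)) ξ]
    rw [hsplit, integral_four n h1 h2 h3 h4p]
    simp only [integral_const_mul]
    rw [ibp_fst n lam f φ ξ j, ibp_snd n lam f φ ξ j]
    simp only [Aop]
    rw [fderiv_weyl_apply n lam f φ ξ j,
      show weylAct n lam (⇑f) (⇑φ) ξ = ∫ p, (⇑f) p * gfun n lam (⇑φ) ξ p from
        congrFun (weylAct_funeq n lam φ (⇑f)) ξ]
    push_cast
    ring
  · have hsplit : (fun p => ZopBar n lam j (⇑f) p * gfun n lam (⇑φ) ξ p) = fun p =>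
        fderiv ℝ (⇑f) p ((Pi.single j 1 : Rn n), (0 : Rn n)) * gfun n lam (⇑φ) ξ p +
          Complex.I * (lam : ℂ) / 2 * (((p.2 j : ℝ) : ℂ) * ((⇑f) p * gfun n lam (⇑φ) ξ p)) +
          -Complex.I * (fderiv ℝ (⇑f) p ((0 : Rn n), (Pi.single j 1 : Rn n)) *
            gfun n lam (⇑φ) ξ p) +
          (-Complex.I * -(Complex.I * (lam : ℂ) / 2)) *
            (((p.1 j : ℝ) : ℂ) * ((⇑f) p * gfun n lam (⇑φ) ξ p)) := by
      funext p
      simp only [ZopBar]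
      ring
    rw [show weylAct n lam (ZopBar n lam j ⇑f) (⇑φ) ξ =
        ∫ p, ZopBar n lam j (⇑f) p * gfun n lam (⇑φ) ξ p from
      congrFun (weylAct_funeq n lam φ (ZopBar n lam j ⇑f)) ξ]
    rw [hsplit, integral_four n h1 h2 h3m h4m]
    simp only [integral_const_mul]
    rw [ibp_fst n lam f φ ξ j, ibp_snd n lam f φ ξ j]
    simp only [AopStar]
    rw [fderiv_weyl_apply n lam f φ ξ j,
      show weylAct n lam (⇑f) (⇑φ) ξ = ∫ p, (⇑f) p * gfun n lam (⇑φ) ξ p from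
        congrFun (weylAct_funeq n lam φ (⇑f)) ξ]
    push_cast
    ring


end QuantumHermite
end
end

section
/- Let n ≥ 1, λ > 0 and t, s > 0. Then for every ξ ∈ ℝ^{2n}: (p_t^λ ∗_λ p_s^λ)(ξ) = p_{t+s}^λ(ξ), i.e. the twisted heat kernels form a semigroup under λ-twisted convolution. -/
open MeasureTheory Complex
open scoped Real ENNReal InnerProductSpace

noncomputable section

namespace QuantumHermite

/-- The twisted heat kernels form a semigroup under `λ`-twisted convolution:
`p_t^λ ∗_λ p_s^λ = p_{t+s}^λ`. -/
theorem heatKernel_twisted_semigroup (n : ℕ) (hn : 1 ≤ n) (lam : ℝ) (hlam : 0 < lam)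
    (t s : ℝ) (ht : 0 < t) (hs : 0 < s) (ξ : R2n n) :
    ∫ η : R2n n, ((heatKernel n lam t (ξ - η) : ℝ) : ℂ) * ((heatKernel n lam s η : ℝ) : ℂ) *
        Complex.exp (Complex.I * ((lam / 2 : ℝ) : ℂ) * ((symp n ξ η : ℝ) : ℂ)) =
      ((heatKernel n lam (t + s) ξ : ℝ) : ℂ) := by
  have hπ := Real.pi_pos
  have hT : 0 < t * lam := mul_pos ht hlam
  have hS : 0 < s * lam := mul_pos hs hlam
  have hshT := Real.sinh_pos_iff.mpr hT
  have hshS := Real.sinh_pos_iff.mpr hS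
  have hshTS : 0 < Real.sinh (t * lam + s * lam) := Real.sinh_pos_iff.mpr (by linarith)
  have hcT := Real.cosh_pos (x := t * lam)
  have hcS := Real.cosh_pos (x := s * lam)
  set cT : ℝ := Real.cosh (t * lam) / Real.sinh (t * lam) with hcTdef
  set cS : ℝ := Real.cosh (s * lam) / Real.sinh (s * lam) with hcSdef
  have hcT0 : 0 < cT := div_pos hcT hshT
  have hcS0 : 0 < cS := div_pos hcS hshS
  set AB : ℝ := lam / 4 * cT + lam / 4 * cS with hABdef
  have hAB : 0 < AB := by positivity
  have hABne : (AB : ℂ) ≠ 0 := by exact_mod_cast hAB.ne'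
  have hb : (-(AB : ℂ)).re < 0 := by
    simpa using hAB
  set Q : ℝ := (∑ j, ξ.1 j ^ 2) + ∑ j, ξ.2 j ^ 2 with hQdef
  set c1 : Fin n → ℂ := fun j =>
    2 * ((lam / 4 * cT : ℝ) : ℂ) * (ξ.1 j : ℂ) +
      Complex.I * ((lam / 2 : ℝ) : ℂ) * (ξ.2 j : ℂ) with hc1def
  set c2 : Fin n → ℂ := fun j =>
    2 * ((lam / 4 * cT : ℝ) : ℂ) * (ξ.2 j : ℂ) -
      Complex.I * ((lam / 2 : ℝ) : ℂ) * (ξ.1 j : ℂ) with hc2def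
  set F : Rn n → ℂ := fun x =>
    ∏ j, Complex.exp (-(AB : ℂ) * (x j : ℂ) ^ 2 + c1 j * (x j : ℂ) + 0) with hFdef
  set G : Rn n → ℂ := fun x =>
    ∏ j, Complex.exp (-(AB : ℂ) * (x j : ℂ) ^ 2 + c2 j * (x j : ℂ) + 0) with hGdef
  set K : ℂ := ((((4 * Real.pi)⁻¹) ^ n * lam ^ n * ((Real.sinh (t * lam))⁻¹) ^ n *
      (((4 * Real.pi)⁻¹) ^ n * lam ^ n * ((Real.sinh (s * lam))⁻¹) ^ n) : ℝ) : ℂ) *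
      Complex.exp ((-(lam / 4 * cT) * Q : ℝ) : ℂ) with hKdef
  -- Pointwise identity for the integrand.
  have hexpkey : ∀ η : R2n n,
      ((-(lam / 4) * cT * ((∑ j, (ξ.1 j - η.1 j) ^ 2) + ∑ j, (ξ.2 j - η.2 j) ^ 2) : ℝ) : ℂ)
        + ((-(lam / 4) * cS * ((∑ j, η.1 j ^ 2) + ∑ j, η.2 j ^ 2) : ℝ) : ℂ)
        + Complex.I * ((lam / 2 : ℝ) : ℂ) *
            (((∑ j, ξ.2 j * η.1 j) - ∑ j, ξ.1 j * η.2 j : ℝ) : ℂ)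
      = ((-(lam / 4 * cT) * Q : ℝ) : ℂ)
        + ((∑ j, (-(AB : ℂ) * (η.1 j : ℂ) ^ 2 + c1 j * (η.1 j : ℂ) + 0))
          + ∑ j, (-(AB : ℂ) * (η.2 j : ℂ) ^ 2 + c2 j * (η.2 j : ℂ) + 0)) := by
    intro η
    simp only [hc1def, hc2def, hABdef, hQdef]
    push_cast
    simp only [mul_add, mul_sub, Finset.mul_sum, neg_mul, neg_add_rev,
      ← Finset.sum_add_distrib, ← Finset.sum_sub_distrib, ← Finset.sum_neg_distrib]
    exact Finset.sum_congr rfl fun j _ => by ring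
  have hker : ∀ (τ : ℝ) (ζ : R2n n), ((heatKernel n lam τ ζ : ℝ) : ℂ)
      = ((((4 * Real.pi)⁻¹) ^ n * lam ^ n * ((Real.sinh (τ * lam))⁻¹) ^ n : ℝ) : ℂ) *
        Complex.exp ((-(lam / 4) * (Real.cosh (τ * lam) / Real.sinh (τ * lam)) *
          ((∑ j, ζ.1 j ^ 2) + ∑ j, ζ.2 j ^ 2) : ℝ) : ℂ) := by
    intro τ ζ
    simp only [heatKernel]
    rw [Complex.ofReal_mul, Complex.ofReal_exp]
  have hpt : ∀ η : R2n n,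
      ((heatKernel n lam t (ξ - η) : ℝ) : ℂ) * ((heatKernel n lam s η : ℝ) : ℂ) *
        Complex.exp (Complex.I * ((lam / 2 : ℝ) : ℂ) * ((symp n ξ η : ℝ) : ℂ))
      = K * (F η.1 * G η.2) := by
    intro η
    rw [hker t (ξ - η), hker s η]
    simp only [symp, Prod.fst_sub, Prod.snd_sub, Pi.sub_apply]
    rw [← hcTdef, ← hcSdef]
    have hx := congrArg Complex.exp (hexpkey η)
    rw [Complex.exp_add, Complex.exp_add, Complex.exp_add, Complex.exp_add,
      Complex.exp_sum, Complex.exp_sum] at hx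
    calc _ = ((((4 * Real.pi)⁻¹) ^ n * lam ^ n * ((Real.sinh (t * lam))⁻¹) ^ n : ℝ) : ℂ) *
            ((((4 * Real.pi)⁻¹) ^ n * lam ^ n * ((Real.sinh (s * lam))⁻¹) ^ n : ℝ) : ℂ) *
            (Complex.exp (((-(lam / 4) * cT *
                ((∑ j, (ξ.1 j - η.1 j) ^ 2) + ∑ j, (ξ.2 j - η.2 j) ^ 2) : ℝ) : ℂ)) *
              Complex.exp (((-(lam / 4) * cS *
                ((∑ j, η.1 j ^ 2) + ∑ j, η.2 j ^ 2) : ℝ) : ℂ)) *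
              Complex.exp (Complex.I * ((lam / 2 : ℝ) : ℂ) *
                (((∑ j, ξ.2 j * η.1 j) - ∑ j, ξ.1 j * η.2 j : ℝ) : ℂ))) := by ring
      _ = K * (F η.1 * G η.2) := by
          rw [hx, hKdef, hFdef, hGdef]
          push_cast
          ring
  -- Split the integral.
  have gauss := fun c : ℂ => integral_cexp_quadratic hb c 0
  have hgpt : ∀ c : ℂ,
      ((Real.pi : ℂ) / -(-(AB : ℂ))) ^ ((1 : ℂ) / 2) *
          Complex.exp (0 - c ^ 2 / (4 * -(AB : ℂ)))
        = ((Real.sqrt (Real.pi / AB) : ℝ) : ℂ) * Complex.exp (c ^ 2 / (4 * (AB : ℂ))) := by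
    intro c
    rw [neg_neg]
    congr 1
    · rw [← Complex.ofReal_div, Real.sqrt_eq_rpow,
        Complex.ofReal_cpow (by positivity : (0:ℝ) ≤ Real.pi / AB)]
      norm_num
    · congr 1
      rw [mul_neg, div_neg, zero_sub, neg_neg]
  calc (∫ η : R2n n, ((heatKernel n lam t (ξ - η) : ℝ) : ℂ) *
          ((heatKernel n lam s η : ℝ) : ℂ) *
          Complex.exp (Complex.I * ((lam / 2 : ℝ) : ℂ) * ((symp n ξ η : ℝ) : ℂ)))
      = ∫ η : R2n n, K * (F η.1 * G η.2) := by simp only [hpt]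
    _ = K * ((∫ x : Rn n, F x) * ∫ y : Rn n, G y) := by
        rw [MeasureTheory.integral_const_mul, MeasureTheory.Measure.volume_eq_prod,
          MeasureTheory.integral_prod_mul]
    _ = K * ((∏ j, ∫ x : ℝ, Complex.exp (-(AB : ℂ) * (x : ℂ) ^ 2 + c1 j * (x : ℂ) + 0)) *
          ∏ j, ∫ x : ℝ, Complex.exp (-(AB : ℂ) * (x : ℂ) ^ 2 + c2 j * (x : ℂ) + 0)) := by
        rw [hFdef, hGdef,
          MeasureTheory.integral_fintype_prod_volume_eq_prod (f := fun j (x : ℝ) =>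
            Complex.exp (-(AB : ℂ) * (x : ℂ) ^ 2 + c1 j * (x : ℂ) + 0)),
          MeasureTheory.integral_fintype_prod_volume_eq_prod (f := fun j (x : ℝ) =>
            Complex.exp (-(AB : ℂ) * (x : ℂ) ^ 2 + c2 j * (x : ℂ) + 0))]
    _ = K * ((∏ j, ((Real.sqrt (Real.pi / AB) : ℝ) : ℂ) *
            Complex.exp (c1 j ^ 2 / (4 * (AB : ℂ)))) *
          ∏ j, ((Real.sqrt (Real.pi / AB) : ℝ) : ℂ) *
            Complex.exp (c2 j ^ 2 / (4 * (AB : ℂ)))) := by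
        simp only [gauss, hgpt]
    _ = ((heatKernel n lam (t + s) ξ : ℝ) : ℂ) := by
        rw [Finset.prod_mul_distrib, Finset.prod_mul_distrib, Finset.prod_const,
          Finset.card_univ, Fintype.card_fin, ← Complex.exp_sum, ← Complex.exp_sum]
        have hj2 : ∀ j, c1 j ^ 2 + c2 j ^ 2
            = (((4 * (lam / 4 * cT) ^ 2 - lam ^ 2 / 4) * (ξ.1 j ^ 2 + ξ.2 j ^ 2) : ℝ) : ℂ) := by
          intro j
          simp only [hc1def, hc2def]
          push_cast
          linear_combination ((lam : ℂ) ^ 2 / 4 * ((ξ.1 j : ℂ) ^ 2 + (ξ.2 j : ℂ) ^ 2)) *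
            Complex.I_sq
        have hSig : (∑ j, c1 j ^ 2 / (4 * (AB : ℂ))) + ∑ j, c2 j ^ 2 / (4 * (AB : ℂ))
            = (((4 * (lam / 4 * cT) ^ 2 - lam ^ 2 / 4) / (4 * AB) * Q : ℝ) : ℂ) := by
          rw [← Finset.sum_div, ← Finset.sum_div, ← add_div, ← Finset.sum_add_distrib]
          simp only [hj2]
          push_cast [hQdef]
          rw [← Finset.mul_sum, Finset.sum_add_distrib]
          ring
        -- combine the two exponentials of real sums
        have hsplit : Complex.exp (∑ j, c1 j ^ 2 / (4 * (AB : ℂ))) *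
            Complex.exp (∑ j, c2 j ^ 2 / (4 * (AB : ℂ)))
            = Complex.exp ((((4 * (lam / 4 * cT) ^ 2 - lam ^ 2 / 4) / (4 * AB) * Q : ℝ) : ℂ)) := by
          rw [← Complex.exp_add, hSig]
        have hsq : ((Real.sqrt (Real.pi / AB) : ℝ) : ℂ) ^ n *
            ((Real.sqrt (Real.pi / AB) : ℝ) : ℂ) ^ n = (((Real.pi / AB) ^ n : ℝ) : ℂ) := by
          rw [← mul_pow, ← Complex.ofReal_mul,
            Real.mul_self_sqrt (by positivity : (0:ℝ) ≤ Real.pi / AB)]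
          push_cast
          ring
        simp only [heatKernel]
        rw [Complex.ofReal_mul, Complex.ofReal_exp, hKdef]
        have hexp2 : -(lam / 4 * cT) * Q +
            (4 * (lam / 4 * cT) ^ 2 - lam ^ 2 / 4) / (4 * AB) * Q
            = -(lam / 4) * (Real.cosh ((t + s) * lam) / Real.sinh ((t + s) * lam)) * Q := by
          have h1 : (t + s) * lam = t * lam + s * lam := by ring
          rw [h1, hABdef, hcTdef, hcSdef, Real.cosh_add, Real.sinh_add]
          have e1 : Real.sinh (t*lam) ≠ 0 := hshT.ne'
          have e2 : Real.sinh (s*lam) ≠ 0 := hshS.ne'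
          have e3 : Real.sinh (t*lam) * Real.cosh (s*lam) +
              Real.cosh (t*lam) * Real.sinh (s*lam) ≠ 0 := by
            rw [← Real.sinh_add]; exact hshTS.ne'
          field_simp
          ring
        have hconst : ((4 * Real.pi)⁻¹) ^ n * lam ^ n * ((Real.sinh (t * lam))⁻¹) ^ n *
            (((4 * Real.pi)⁻¹) ^ n * lam ^ n * ((Real.sinh (s * lam))⁻¹) ^ n) *
            (Real.pi / AB) ^ n
            = ((4 * Real.pi)⁻¹) ^ n * lam ^ n * ((Real.sinh ((t + s) * lam))⁻¹) ^ n := by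
          have h1 : (t + s) * lam = t * lam + s * lam := by ring
          rw [h1]
          simp only [← mul_pow]
          congr 1
          rw [hABdef, hcTdef, hcSdef, Real.sinh_add]
          have e3 : Real.sinh (t*lam) * Real.cosh (s*lam) +
              Real.cosh (t*lam) * Real.sinh (s*lam) ≠ 0 := by
            rw [← Real.sinh_add]; exact hshTS.ne'
          field_simp
          ring
        calc ((((4 * Real.pi)⁻¹) ^ n * lam ^ n * ((Real.sinh (t * lam))⁻¹) ^ n *
              (((4 * Real.pi)⁻¹) ^ n * lam ^ n * ((Real.sinh (s * lam))⁻¹) ^ n) : ℝ) : ℂ) *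
              Complex.exp ((-(lam / 4 * cT) * Q : ℝ) : ℂ) *
              ((((Real.sqrt (Real.pi / AB) : ℝ) : ℂ) ^ n *
                Complex.exp (∑ j, c1 j ^ 2 / (4 * (AB : ℂ))) *
              (((Real.sqrt (Real.pi / AB) : ℝ) : ℂ) ^ n *
                Complex.exp (∑ j, c2 j ^ 2 / (4 * (AB : ℂ))))))
            = ((((4 * Real.pi)⁻¹) ^ n * lam ^ n * ((Real.sinh (t * lam))⁻¹) ^ n *
              (((4 * Real.pi)⁻¹) ^ n * lam ^ n * ((Real.sinh (s * lam))⁻¹) ^ n) : ℝ) : ℂ) *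
              ((((Real.pi / AB) ^ n : ℝ) : ℂ)) *
              (Complex.exp ((-(lam / 4 * cT) * Q : ℝ) : ℂ) *
                Complex.exp ((((4 * (lam / 4 * cT) ^ 2 - lam ^ 2 / 4) / (4 * AB) * Q : ℝ) : ℂ))) := by
              rw [← hsq, ← hsplit]; ring
          _ = ((((4 * Real.pi)⁻¹) ^ n * lam ^ n * ((Real.sinh ((t + s) * lam))⁻¹) ^ n : ℝ) : ℂ) *
              Complex.exp ((-(lam / 4) *
                (Real.cosh ((t + s) * lam) / Real.sinh ((t + s) * lam)) * Q : ℝ) : ℂ) := by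
              rw [← Complex.exp_add, ← Complex.ofReal_add, hexp2, ← Complex.ofReal_mul,
                hconst]
          _ = _ := by norm_cast

end QuantumHermite
end
end

section
/- Let n ≥ 1 and λ > 0, and set a_{n,λ} = π^{n/2} c_{n,λ}^{1/2}. The map T_λ F = a_{n,λ} (F ∘ σ_λ) maps the Fock space F(ℂ^{2n}) bijectively onto the twisted Fock space F^λ(ℂ^{2n}), and for every F ∈ F(ℂ^{2n}): ∫_{ℂ^{2n}} |a_{n,λ} F(σ_λ ζ)|² w_λ(ζ) dζ = ∫_{ℂ^{2n}} |F(ζ)|² dν_{2n}(ζ). In particular T_λ is an isometric isomorphism of Hilbert spaces. -/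
open MeasureTheory Complex
open scoped Real ENNReal InnerProductSpace

noncomputable section

namespace QuantumHermite

/-- The Gaussian weight of the Fock space `F(ℂ^{2n})`. -/
def gaussW (n : ℕ) (ζ : C2n n) : ℝ :=
  ((4 * Real.pi)⁻¹) ^ n * Real.exp (-((∑ j, ‖ζ.1 j‖ ^ 2) + ∑ j, ‖ζ.2 j‖ ^ 2) / 2)

/-- The weight function `w_λ` of the twisted Fock space `F^λ(ℂ^{2n})`. -/
def wLam (n : ℕ) (lam : ℝ) (ζ : C2n n) : ℝ :=
  4 ^ n * cnl n lam * Real.exp (lam * (∑ j, ζ.1 j * (starRingEnd ℂ) (ζ.2 j)).im) *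
    Real.exp (-(lam / 2) * (Real.cosh lam / Real.sinh lam) *
      ((∑ j, ‖ζ.1 j‖ ^ 2) + ∑ j, ‖ζ.2 j‖ ^ 2))

/-- The Fock space `F(ℂ^{2n})`, as a set of functions. -/
def Fock (n : ℕ) : Set (C2n n → ℂ) :=
  {F | Differentiable ℂ F ∧ Integrable (fun ζ => ‖F ζ‖ ^ 2 * gaussW n ζ) volume}

/-- The twisted Fock space `F^λ(ℂ^{2n})`, as a set of functions. -/
def FockLam (n : ℕ) (lam : ℝ) : Set (C2n n → ℂ) :=
  {F | Differentiable ℂ F ∧ Integrable (fun ζ => ‖F ζ‖ ^ 2 * wLam n lam ζ) volume}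


/-! ### Auxiliary machinery for the Fock-space deformation theorem -/

section FockDeformation

variable {n : ℕ}

/-- A generic "rotation-type" complex-linear map on `ℂ^{2n}`. -/
def FDgmap (u : ℝ) (cc e : ℂ) (ζ : C2n n) : C2n n :=
  (fun j => (u:ℂ) * (cc * ζ.1 j - Complex.I * e * ζ.2 j),
   fun j => (u:ℂ) * (cc * ζ.2 j + Complex.I * e * ζ.1 j))

def FDshA (a : ℂ) (p : C2n n) : C2n n := (p.1, p.2 + a • p.1)
def FDshB (b : ℂ) (p : C2n n) : C2n n := (p.1 + b • p.2, p.2)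

lemma FDmp_shA (a : ℂ) : MeasurePreserving (FDshA (n := n) a) volume volume := by
  rw [Measure.volume_eq_prod]
  exact (MeasurePreserving.id _).skew_product
    (f := id) (g := fun z x => x + a • z)
    (by unfold Function.uncurry; fun_prop)
    (Filter.Eventually.of_forall fun z =>
      (measurePreserving_add_right volume (a • z)).map_eq)

lemma FDmp_swap : MeasurePreserving (Prod.swap : C2n n → C2n n) volume volume := by
  rw [Measure.volume_eq_prod]
  exact Measure.measurePreserving_swap

lemma FDmp_shB (b : ℂ) : MeasurePreserving (FDshB (n := n) b) volume volume := by
  have h : FDshB (n := n) b = Prod.swap ∘ FDshA b ∘ Prod.swap := rfl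
  rw [h]
  exact FDmp_swap.comp ((FDmp_shA b).comp FDmp_swap)

lemma FDgmap_gmap (u v : ℝ) (cc e dd f : ℂ) (ζ : C2n n) :
    FDgmap u cc e (FDgmap v dd f ζ) = FDgmap (u*v) (cc*dd + e*f) (cc*f + e*dd) ζ := by
  unfold FDgmap
  refine Prod.ext ?_ ?_
  · funext j; push_cast
    linear_combination (-(↑u * ↑v * ζ.1 j * f * e : ℂ)) * Complex.I_sq
  · funext j; push_cast
    linear_combination (-(↑u * ↑v * ζ.2 j * f * e : ℂ)) * Complex.I_sq

lemma FDgmap_one (ζ : C2n n) : FDgmap 1 1 0 ζ = ζ := by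
  unfold FDgmap
  refine Prod.ext ?_ ?_ <;>
  · funext j; simp

lemma FDdecomp' (u : ℝ) (cc al be : ℂ) (hb : al * be = cc - 1) (h1 : cc^2 + al^2 = 1)
    (hal : al ≠ 0) (ζ : C2n n) :
    ((fun j => (u:ℂ)*(cc*ζ.1 j - al*ζ.2 j), fun j => (u:ℂ)*(cc*ζ.2 j + al*ζ.1 j)) : C2n n)
      = u • FDshB be (FDshA al (FDshB be ζ)) := by
  unfold FDshA FDshB
  refine Prod.ext ?_ ?_
  · funext j
    simp only [Prod.smul_fst, Prod.smul_snd, Pi.smul_apply, Pi.add_apply, Complex.real_smul,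
      smul_eq_mul]
    have hinv : al * al⁻¹ = 1 := mul_inv_cancel₀ hal
    linear_combination (-(u:ℂ)*ζ.1 j - (u:ℂ)*ζ.2 j*be - (u:ℂ)*ζ.2 j*(1+cc)/al) * hb
      + (-(u:ℂ)*ζ.2 j/al) * h1 + ((u:ℂ)*ζ.2 j*(be*cc + be + al)) * hinv
  · funext j
    simp only [Prod.smul_fst, Prod.smul_snd, Pi.smul_apply, Pi.add_apply, Complex.real_smul,
      smul_eq_mul]
    linear_combination (-(u:ℂ)*ζ.2 j) * hb

lemma FDgmap_decomp (u : ℝ) (cc e : ℂ) (he : e ≠ 0) (h1 : cc^2 - e^2 = 1) (ζ : C2n n) :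
    FDgmap u cc e ζ =
      u • FDshB ((cc-1)/(Complex.I*e)) (FDshA (Complex.I*e)
        (FDshB ((cc-1)/(Complex.I*e)) ζ)) := by
  have hal : (Complex.I*e) ≠ 0 := mul_ne_zero Complex.I_ne_zero he
  have h1' : cc^2 + (Complex.I*e)^2 = 1 := by
    rw [mul_pow, Complex.I_sq]; linear_combination h1
  have hb : (Complex.I*e) * ((cc-1)/(Complex.I*e)) = cc - 1 := mul_div_cancel₀ _ hal
  exact FDdecomp' u cc (Complex.I*e) _ hb h1' hal ζ

instance : (volume : Measure (C2n n)).IsAddHaarMeasure :=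
  Measure.prod.instIsAddHaarMeasure volume volume

lemma FDfinrank_C2n : Module.finrank ℝ (C2n n) = 4 * n := by
  rw [Module.finrank_prod, Module.finrank_pi_fintype, Complex.finrank_real_complex]
  simp [Finset.sum_const, mul_comm]
  ring

lemma FDmp_M (al be : ℂ) :
    MeasurePreserving (fun ζ : C2n n => FDshB be (FDshA al (FDshB be ζ))) volume volume :=
  (FDmp_shB be).comp ((FDmp_shA al).comp (FDmp_shB be))

lemma FDintegral_comp_gmap (u : ℝ) (cc e : ℂ) (hu : 0 < u) (he : e ≠ 0)
    (h1 : cc^2 - e^2 = 1) (f : C2n n → ℝ) (hf : Continuous f) :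
    ∫ ζ, f (FDgmap u cc e ζ) = (u ^ (4*n))⁻¹ • ∫ ζ, f ζ := by
  simp only [fun ζ => FDgmap_decomp u cc e he h1 ζ]
  set M := fun ζ : C2n n => FDshB ((cc-1)/(Complex.I*e)) (FDshA (Complex.I*e)
    (FDshB ((cc-1)/(Complex.I*e)) ζ)) with hMdef
  have hM : MeasurePreserving M volume volume := FDmp_M _ _
  have hmeas : AEStronglyMeasurable (fun η : C2n n => f (u • η))
      (Measure.map M volume) :=
    (hf.comp (continuous_const_smul u)).aestronglyMeasurable
  calc ∫ ζ, f (u • M ζ) = ∫ η, f (u • η) ∂(Measure.map M volume) :=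
        (integral_map hM.aemeasurable hmeas).symm
    _ = ∫ η, f (u • η) := by rw [hM.map_eq]
    _ = (u ^ (4*n))⁻¹ • ∫ ζ, f ζ := by
        rw [Measure.integral_comp_smul volume f u, FDfinrank_C2n]
        congr 1
        exact abs_of_nonneg (by positivity)

lemma FDintegrable_comp_gmap (u : ℝ) (cc e : ℂ) (hu : u ≠ 0) (he : e ≠ 0)
    (h1 : cc^2 - e^2 = 1) (f : C2n n → ℝ) (hf : Continuous f) (hi : Integrable f volume) :
    Integrable (fun ζ => f (FDgmap u cc e ζ)) volume := by
  simp only [fun ζ => FDgmap_decomp u cc e he h1 ζ]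
  set M := fun ζ : C2n n => FDshB ((cc-1)/(Complex.I*e)) (FDshA (Complex.I*e)
    (FDshB ((cc-1)/(Complex.I*e)) ζ)) with hMdef
  have hM : MeasurePreserving M volume volume := FDmp_M _ _
  have h2 : Integrable (fun x : C2n n => f (u • x)) volume :=
    (integrable_comp_smul_iff volume f hu).2 hi
  have h3 := integrable_map_measure (μ := volume) (f := M)
    (g := fun η : C2n n => f (u • η))
    ((hf.comp (continuous_const_smul u)).aestronglyMeasurable) hM.aemeasurable
  rw [hM.map_eq] at h3
  exact h3.1 h2

lemma FDnorm_pair (q c s : ℝ) (hq : 0 ≤ q) (z w : ℂ) :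
    ‖(Real.sqrt q : ℂ) * ((c:ℂ)*z - Complex.I*(s:ℂ)*w)‖^2 +
      ‖(Real.sqrt q : ℂ) * ((c:ℂ)*w + Complex.I*(s:ℂ)*z)‖^2
    = q * ((c^2+s^2) * (‖z‖^2 + ‖w‖^2) - 2*(2*s*c) * (z * (starRingEnd ℂ) w).im) := by
  have hs : Real.sqrt q ^ 2 = q := Real.sq_sqrt hq
  simp only [Complex.sq_norm, Complex.normSq_apply, Complex.mul_re,
    Complex.mul_im, Complex.sub_re, Complex.sub_im, Complex.add_re, Complex.add_im,
    Complex.I_re, Complex.I_im, Complex.ofReal_re, Complex.ofReal_im,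
    Complex.conj_re, Complex.conj_im]
  linear_combination ((c^2+s^2)*(z.re^2+z.im^2+w.re^2+w.im^2)
    - 4*s*c*(z.im*w.re - z.re*w.im)) * hs

variable {lam : ℝ}

lemma FDsigma_eq : sigmaLam n lam
    = FDgmap (Real.sqrt (lam / Real.sinh lam))
        ((Real.cosh (lam/2) : ℝ) : ℂ) ((Real.sinh (lam/2) : ℝ) : ℂ) := rfl

/-- The inverse of `σ_λ`. -/
def FDinv (n : ℕ) (lam : ℝ) : C2n n → C2n n :=
  FDgmap (Real.sqrt (Real.sinh lam / lam))
    ((Real.cosh (lam/2) : ℝ) : ℂ) (-((Real.sinh (lam/2) : ℝ) : ℂ))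

lemma FDsum_norm_sigma (hlam : 0 < lam) (ζ : C2n n) :
    (∑ j, ‖(sigmaLam n lam ζ).1 j‖^2) + ∑ j, ‖(sigmaLam n lam ζ).2 j‖^2
      = (lam / Real.sinh lam) * (Real.cosh lam * ((∑ j, ‖ζ.1 j‖^2) + ∑ j, ‖ζ.2 j‖^2)
          - 2 * Real.sinh lam * (∑ j, ζ.1 j * (starRingEnd ℂ) (ζ.2 j)).im) := by
  have hsinh : 0 < Real.sinh lam := Real.sinh_pos_iff.2 hlam
  have hq : (0:ℝ) ≤ lam / Real.sinh lam := by positivity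
  have hc := Real.cosh_two_mul (lam/2)
  have hs2 := Real.sinh_two_mul (lam/2)
  rw [show 2*(lam/2) = lam from by ring] at hc hs2
  have key : ∀ j, ‖(sigmaLam n lam ζ).1 j‖^2 + ‖(sigmaLam n lam ζ).2 j‖^2
      = (lam / Real.sinh lam) * (Real.cosh lam * (‖ζ.1 j‖^2 + ‖ζ.2 j‖^2)
          - 2 * Real.sinh lam * (ζ.1 j * (starRingEnd ℂ) (ζ.2 j)).im) := by
    intro j
    have h := FDnorm_pair (lam / Real.sinh lam) (Real.cosh (lam/2)) (Real.sinh (lam/2)) hq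
      (ζ.1 j) (ζ.2 j)
    rw [← hc, ← hs2] at h
    exact h
  calc (∑ j, ‖(sigmaLam n lam ζ).1 j‖^2) + ∑ j, ‖(sigmaLam n lam ζ).2 j‖^2
      = ∑ j, (‖(sigmaLam n lam ζ).1 j‖^2 + ‖(sigmaLam n lam ζ).2 j‖^2) :=
        Finset.sum_add_distrib.symm
    _ = ∑ j, (lam / Real.sinh lam) * (Real.cosh lam * (‖ζ.1 j‖^2 + ‖ζ.2 j‖^2)
          - 2 * Real.sinh lam * (ζ.1 j * (starRingEnd ℂ) (ζ.2 j)).im) :=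
        Finset.sum_congr rfl fun j _ => key j
    _ = _ := by
        rw [Complex.im_sum]
        simp only [mul_sub, mul_add, Finset.sum_sub_distrib, Finset.sum_add_distrib,
          ← Finset.mul_sum]

lemma FDcnl_pos (hlam : 0 < lam) : 0 < cnl n lam := by
  have hsinh : 0 < Real.sinh lam := Real.sinh_pos_iff.2 hlam
  have h1 : (0:ℝ) < (4*Real.pi)⁻¹ := by positivity
  exact mul_pos (mul_pos (pow_pos h1 n) (pow_pos hlam n)) (pow_pos (inv_pos.2 hsinh) n)

lemma FDweight_eq (hlam : 0 < lam) (ζ : C2n n) :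
    (Real.pi ^ ((n:ℝ)/2) * Real.sqrt (cnl n lam))^2 * wLam n lam ζ
      = (lam / Real.sinh lam)^(2*n) * gaussW n (sigmaLam n lam ζ) := by
  have hsinh : 0 < Real.sinh lam := Real.sinh_pos_iff.2 hlam
  have hcnl : 0 < cnl n lam := FDcnl_pos hlam
  have hr2 : (Real.pi ^ ((n:ℝ)/2) * Real.sqrt (cnl n lam))^2 = Real.pi ^ n * cnl n lam := by
    rw [mul_pow, Real.sq_sqrt hcnl.le, ← Real.rpow_natCast (Real.pi ^ ((n:ℝ)/2)) 2,
      ← Real.rpow_mul Real.pi_pos.le]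
    norm_num [Real.rpow_natCast]
  have hconst : Real.pi ^ n * cnl n lam * (4^n * cnl n lam)
      = (lam / Real.sinh lam)^(2*n) * ((4*Real.pi)⁻¹)^n := by
    simp only [cnl]
    rw [show 2*n = n+n from by ring]
    field_simp
    have h1 : Real.pi ^ n * Real.pi⁻¹ ^ n = 1 := by
      rw [← mul_pow, mul_inv_cancel₀ Real.pi_ne_zero, one_pow]
    have h2 : (1/4:ℝ)^n * 4^n = 1 := by rw [← mul_pow]; norm_num
    linear_combination (lam ^ (n * 2) * (Real.sinh lam)⁻¹ ^ (n * 2) * (1/4:ℝ)^n * 4^n) * h1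
      + (lam ^ (n * 2) * (Real.sinh lam)⁻¹ ^ (n * 2)) * h2
  unfold wLam gaussW
  rw [FDsum_norm_sigma hlam, hr2]
  rw [show ∀ a b c d : ℝ, a * (b * Real.exp c * Real.exp d) = (a*b) * Real.exp (c+d) from
    fun a b c d => by rw [Real.exp_add]; ring]
  rw [hconst]
  rw [show ∀ a b c : ℝ, a * (b * Real.exp c) = (a*b) * Real.exp c from fun a b c => by ring]
  congr 1
  field_simp
  ring

lemma FDcont_gaussW : Continuous (gaussW n) := by unfold gaussW; fun_prop

lemma FDcont_wLam : Continuous (wLam n lam) := by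
  unfold wLam
  refine (continuous_const.mul ?_).mul ?_
  · exact Real.continuous_exp.comp (continuous_const.mul (Complex.continuous_im.comp
      (continuous_finset_sum _ fun j _ => ((continuous_apply j).comp continuous_fst).mul
        (Complex.continuous_conj.comp ((continuous_apply j).comp continuous_snd)))))
  · exact Real.continuous_exp.comp (continuous_const.mul ((continuous_finset_sum _ fun j _ =>
      (((continuous_apply j).comp continuous_fst).norm.pow 2)).add
      (continuous_finset_sum _ fun j _ => (((continuous_apply j).comp continuous_snd).norm.pow 2))))

lemma FDdiff_gmap (u : ℝ) (cc e : ℂ) : Differentiable ℂ (FDgmap (n := n) u cc e) := by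
  unfold FDgmap; fun_prop

end FockDeformation


section FockDeformation2

variable {n : ℕ} {lam : ℝ}

lemma FDst_one (hlam : 0 < lam) :
    Real.sqrt (lam / Real.sinh lam) * Real.sqrt (Real.sinh lam / lam) = 1 := by
  have hsinh : 0 < Real.sinh lam := Real.sinh_pos_iff.2 hlam
  rw [← Real.sqrt_mul (by positivity),
    show lam / Real.sinh lam * (Real.sinh lam / lam) = 1 from by field_simp]
  exact Real.sqrt_one

lemma FDhch : ((Real.cosh (lam/2) : ℝ) : ℂ)^2 - ((Real.sinh (lam/2) : ℝ) : ℂ)^2 = 1 := by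
  exact_mod_cast Real.cosh_sq_sub_sinh_sq (lam/2)

lemma FDss_ne (hlam : 0 < lam) : ((Real.sinh (lam/2) : ℝ) : ℂ) ≠ 0 :=
  Complex.ofReal_ne_zero.2 (Real.sinh_pos_iff.2 (by linarith : 0 < lam/2)).ne'

lemma FDsigma_inv (hlam : 0 < lam) (ζ : C2n n) : sigmaLam n lam (FDinv n lam ζ) = ζ := by
  rw [FDsigma_eq]; unfold FDinv
  rw [FDgmap_gmap, FDst_one hlam,
    show ((Real.cosh (lam/2):ℝ):ℂ) * ((Real.cosh (lam/2):ℝ):ℂ)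
      + ((Real.sinh (lam/2):ℝ):ℂ) * -((Real.sinh (lam/2):ℝ):ℂ) = 1 from by
      linear_combination (FDhch (lam := lam)),
    show ((Real.cosh (lam/2):ℝ):ℂ) * -((Real.sinh (lam/2):ℝ):ℂ)
      + ((Real.sinh (lam/2):ℝ):ℂ) * ((Real.cosh (lam/2):ℝ):ℂ) = 0 from by ring]
  exact FDgmap_one ζ

lemma FDinv_sigma (hlam : 0 < lam) (ζ : C2n n) : FDinv n lam (sigmaLam n lam ζ) = ζ := by
  rw [FDsigma_eq]; unfold FDinv
  rw [FDgmap_gmap,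
    show Real.sqrt (Real.sinh lam / lam) * Real.sqrt (lam / Real.sinh lam) = 1 from by
      rw [mul_comm]; exact FDst_one hlam,
    show ((Real.cosh (lam/2):ℝ):ℂ) * ((Real.cosh (lam/2):ℝ):ℂ)
      + -((Real.sinh (lam/2):ℝ):ℂ) * ((Real.sinh (lam/2):ℝ):ℂ) = 1 from by
      linear_combination (FDhch (lam := lam)),
    show ((Real.cosh (lam/2):ℝ):ℂ) * ((Real.sinh (lam/2):ℝ):ℂ)
      + -((Real.sinh (lam/2):ℝ):ℂ) * ((Real.cosh (lam/2):ℝ):ℂ) = 0 from by ring]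
  exact FDgmap_one ζ

lemma FDintegral_sigma (hlam : 0 < lam) (f : C2n n → ℝ) (hf : Continuous f) :
    ∫ ζ, f (sigmaLam n lam ζ) = ((lam / Real.sinh lam)^(2*n))⁻¹ • ∫ ζ, f ζ := by
  have hsinh : 0 < Real.sinh lam := Real.sinh_pos_iff.2 hlam
  have hq : 0 < lam / Real.sinh lam := by positivity
  have h := FDintegral_comp_gmap (Real.sqrt (lam / Real.sinh lam))
    ((Real.cosh (lam/2) : ℝ) : ℂ) ((Real.sinh (lam/2) : ℝ) : ℂ)
    (Real.sqrt_pos.2 hq) (FDss_ne hlam) FDhch f hf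
  rw [show Real.sqrt (lam / Real.sinh lam) ^ (4*n) = (lam / Real.sinh lam)^(2*n) from by
    rw [show 4*n = 2*(2*n) from by ring, pow_mul, Real.sq_sqrt hq.le]] at h
  rw [FDsigma_eq]
  exact h

lemma FDintegrable_sigma (hlam : 0 < lam) (f : C2n n → ℝ) (hf : Continuous f)
    (hi : Integrable f volume) :
    Integrable (fun ζ : C2n n => f (sigmaLam n lam ζ)) volume := by
  have hsinh : 0 < Real.sinh lam := Real.sinh_pos_iff.2 hlam
  have hq : 0 < lam / Real.sinh lam := by positivity
  rw [FDsigma_eq]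
  exact FDintegrable_comp_gmap _ _ _ (Real.sqrt_pos.2 hq).ne' (FDss_ne hlam) FDhch f hf hi

lemma FDintegrable_inv (hlam : 0 < lam) (f : C2n n → ℝ) (hf : Continuous f)
    (hi : Integrable f volume) :
    Integrable (fun ζ : C2n n => f (FDinv n lam ζ)) volume := by
  have hsinh : 0 < Real.sinh lam := Real.sinh_pos_iff.2 hlam
  have hq : 0 < Real.sinh lam / lam := by positivity
  unfold FDinv
  refine FDintegrable_comp_gmap _ _ _ (Real.sqrt_pos.2 hq).ne' (neg_ne_zero.2 (FDss_ne hlam))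
    ?_ f hf hi
  rw [neg_pow]
  simpa using FDhch (lam := lam)

lemma FDintegrand (hlam : 0 < lam) (F : C2n n → ℂ) (ζ : C2n n) :
    ‖((Real.pi ^ ((n : ℝ) / 2) * Real.sqrt (cnl n lam) : ℝ) : ℂ) * F (sigmaLam n lam ζ)‖^2
        * wLam n lam ζ
      = (lam / Real.sinh lam)^(2*n)
        * (‖F (sigmaLam n lam ζ)‖^2 * gaussW n (sigmaLam n lam ζ)) := by
  have hr : (0:ℝ) ≤ Real.pi ^ ((n:ℝ)/2) * Real.sqrt (cnl n lam) := by positivity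
  rw [norm_mul, Complex.norm_real, Real.norm_eq_abs, _root_.abs_of_nonneg hr, mul_pow]
  linear_combination ‖F (sigmaLam n lam ζ)‖^2 * FDweight_eq hlam ζ

end FockDeformation2

/-- `T_λ F = a_{n,λ} F ∘ σ_λ` is an isometric isomorphism from the Fock space onto the
twisted Fock space. -/
theorem fock_deformation (n : ℕ) (hn : 1 ≤ n) (lam : ℝ) (hlam : 0 < lam) :
    Set.BijOn (fun (F : C2n n → ℂ) =>
        (fun ζ => ((Real.pi ^ ((n : ℝ) / 2) * Real.sqrt (cnl n lam) : ℝ) : ℂ) *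
          F (sigmaLam n lam ζ)))
      (Fock n) (FockLam n lam) ∧
    ∀ F ∈ Fock n,
      ∫ ζ : C2n n, ‖((Real.pi ^ ((n : ℝ) / 2) * Real.sqrt (cnl n lam) : ℝ) : ℂ) *
          F (sigmaLam n lam ζ)‖ ^ 2 * wLam n lam ζ =
        ∫ ζ : C2n n, ‖F ζ‖ ^ 2 * gaussW n ζ := by
  have hsinh : 0 < Real.sinh lam := Real.sinh_pos_iff.2 hlam
  have hq : 0 < lam / Real.sinh lam := by positivity
  have hqn : (0:ℝ) < (lam / Real.sinh lam)^(2*n) := pow_pos hq _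
  have hcnl : 0 < cnl n lam := FDcnl_pos hlam
  have hr : 0 < Real.pi ^ ((n:ℝ)/2) * Real.sqrt (cnl n lam) :=
    mul_pos (Real.rpow_pos_of_pos Real.pi_pos _) (Real.sqrt_pos.2 hcnl)
  have hrC : ((Real.pi ^ ((n : ℝ) / 2) * Real.sqrt (cnl n lam) : ℝ) : ℂ) ≠ 0 :=
    Complex.ofReal_ne_zero.2 hr.ne'
  have hdiffσ : Differentiable ℂ (sigmaLam n lam) := by
    rw [FDsigma_eq]; exact FDdiff_gmap _ _ _
  have main : ∀ F ∈ Fock n,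
      ∫ ζ : C2n n, ‖((Real.pi ^ ((n : ℝ) / 2) * Real.sqrt (cnl n lam) : ℝ) : ℂ) *
          F (sigmaLam n lam ζ)‖ ^ 2 * wLam n lam ζ =
        ∫ ζ : C2n n, ‖F ζ‖ ^ 2 * gaussW n ζ := by
    intro F hF
    have hGc : Continuous fun ζ : C2n n => ‖F ζ‖^2 * gaussW n ζ :=
      (hF.1.continuous.norm.pow 2).mul FDcont_gaussW
    calc ∫ ζ : C2n n, ‖((Real.pi ^ ((n : ℝ) / 2) * Real.sqrt (cnl n lam) : ℝ) : ℂ) *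
            F (sigmaLam n lam ζ)‖ ^ 2 * wLam n lam ζ
        = ∫ ζ : C2n n, (lam / Real.sinh lam)^(2*n) *
            ((fun η => ‖F η‖^2 * gaussW n η) (sigmaLam n lam ζ)) := by
          simp only [FDintegrand hlam F]
      _ = (lam / Real.sinh lam)^(2*n) *
            ∫ ζ : C2n n, (fun η => ‖F η‖^2 * gaussW n η) (sigmaLam n lam ζ) :=
          integral_const_mul _ _
      _ = (lam / Real.sinh lam)^(2*n) *
            (((lam / Real.sinh lam)^(2*n))⁻¹ • ∫ ζ : C2n n, ‖F ζ‖^2 * gaussW n ζ) := by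
          rw [FDintegral_sigma hlam _ hGc]
      _ = ∫ ζ : C2n n, ‖F ζ‖^2 * gaussW n ζ := by
          rw [smul_eq_mul, ← mul_assoc, mul_inv_cancel₀ hqn.ne', one_mul]
  refine ⟨⟨?_, ?_, ?_⟩, main⟩
  · -- MapsTo
    intro F hF
    have hGc : Continuous fun ζ : C2n n => ‖F ζ‖^2 * gaussW n ζ :=
      (hF.1.continuous.norm.pow 2).mul FDcont_gaussW
    refine ⟨(hF.1.comp hdiffσ).const_mul _, ?_⟩
    have heq : (fun ζ : C2n n =>
        ‖((Real.pi ^ ((n : ℝ) / 2) * Real.sqrt (cnl n lam) : ℝ) : ℂ) *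
          F (sigmaLam n lam ζ)‖ ^ 2 * wLam n lam ζ)
        = fun ζ : C2n n => (lam / Real.sinh lam)^(2*n) *
            ((fun η => ‖F η‖^2 * gaussW n η) (sigmaLam n lam ζ)) :=
      funext (FDintegrand hlam F)
    rw [heq]
    exact (FDintegrable_sigma hlam _ hGc hF.2).const_mul _
  · -- InjOn
    intro F₁ _ F₂ _ h
    funext η
    have h2 := congrFun h (FDinv n lam η)
    simp only [FDsigma_inv hlam] at h2
    exact mul_left_cancel₀ hrC h2
  · -- SurjOn
    intro G hG
    have hWc : Continuous fun ζ : C2n n => ‖G ζ‖^2 * wLam n lam ζ :=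
      (hG.1.continuous.norm.pow 2).mul FDcont_wLam
    have hdiffinv : Differentiable ℂ (FDinv n lam) := FDdiff_gmap _ _ _
    refine ⟨fun η => ((Real.pi ^ ((n : ℝ) / 2) * Real.sqrt (cnl n lam) : ℝ) : ℂ)⁻¹ *
        G (FDinv n lam η), ⟨?_, ?_⟩, ?_⟩
    · exact (hG.1.comp hdiffinv).const_mul _
    · have hpt : ∀ η : C2n n,
          ‖((Real.pi ^ ((n : ℝ) / 2) * Real.sqrt (cnl n lam) : ℝ) : ℂ)⁻¹ *
              G (FDinv n lam η)‖ ^ 2 * gaussW n η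
            = ((lam / Real.sinh lam)^(2*n))⁻¹ *
              ((fun ζ => ‖G ζ‖^2 * wLam n lam ζ) (FDinv n lam η)) := by
        intro η
        have hw := FDweight_eq hlam (FDinv n lam η)
        rw [FDsigma_inv hlam] at hw
        have hg : gaussW n η = ((lam / Real.sinh lam)^(2*n))⁻¹ *
            ((Real.pi ^ ((n:ℝ)/2) * Real.sqrt (cnl n lam))^2 * wLam n lam (FDinv n lam η)) := by
          rw [hw, ← mul_assoc, inv_mul_cancel₀ hqn.ne', one_mul]
        rw [norm_mul, norm_inv, Complex.norm_real, Real.norm_eq_abs,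
          _root_.abs_of_nonneg hr.le, mul_pow, hg]
        simp only
        field_simp
      rw [show (fun η : C2n n =>
          ‖((Real.pi ^ ((n : ℝ) / 2) * Real.sqrt (cnl n lam) : ℝ) : ℂ)⁻¹ *
              G (FDinv n lam η)‖ ^ 2 * gaussW n η)
          = fun η : C2n n => ((lam / Real.sinh lam)^(2*n))⁻¹ *
              ((fun ζ => ‖G ζ‖^2 * wLam n lam ζ) (FDinv n lam η)) from funext hpt]
      exact (FDintegrable_inv hlam _ hWc hG.2).const_mul _
    · funext η
      simp only [FDinv_sigma hlam]
      rw [← mul_assoc, mul_inv_cancel₀ hrC, one_mul]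

end QuantumHermite
end
end

section
/- Let n ≥ 1, λ > 0, and ζ = (z,w), ζ' = (z',w') ∈ ℂ^n × ℂ^n. Writing a·b = ∑_j a_j b_j for the bilinear dot product and conj for componentwise complex conjugation, one has exp((1/2) (σ_λ ζ')·conj(σ_λ ζ)) = exp((1/2) λ (coth λ) ∑_{j=1}^{2n} ζ'_j conj(ζ_j)) · exp(−i(λ/2)(w'·conj(z) − z'·conj(w))). -/
open MeasureTheory Complex
open scoped Real ENNReal InnerProductSpace

noncomputable section

namespace QuantumHermite

/-- The reproducing-kernel identity
`e^{(1/2)(σ_λζ')·conj(σ_λζ)} = e^{(1/2)λ coth λ (ζ'·conj ζ)} e^{-i(λ/2)[conj ζ, ζ']}`. -/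
theorem sigmaLam_kernel_identity (n : ℕ) (hn : 1 ≤ n) (lam : ℝ) (hlam : 0 < lam)
    (ζ ζ' : C2n n) :
    Complex.exp ((1 / 2) * ((∑ j, (sigmaLam n lam ζ').1 j *
          (starRingEnd ℂ) ((sigmaLam n lam ζ).1 j)) +
        ∑ j, (sigmaLam n lam ζ').2 j * (starRingEnd ℂ) ((sigmaLam n lam ζ).2 j))) =
      Complex.exp ((1 / 2) * ((lam * (Real.cosh lam / Real.sinh lam) : ℝ) : ℂ) *
          ((∑ j, ζ'.1 j * (starRingEnd ℂ) (ζ.1 j)) +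
            ∑ j, ζ'.2 j * (starRingEnd ℂ) (ζ.2 j))) *
        Complex.exp (-Complex.I * ((lam / 2 : ℝ) : ℂ) *
          ((∑ j, ζ'.2 j * (starRingEnd ℂ) (ζ.1 j)) -
            ∑ j, ζ'.1 j * (starRingEnd ℂ) (ζ.2 j))) := by
  rw [← Complex.exp_add]
  congr 1
  have hsh0 : (0:ℝ) < Real.sinh lam := Real.sinh_pos_iff.2 hlam
  have hshC : Complex.sinh (lam : ℂ) ≠ 0 := by
    rw [← Complex.ofReal_sinh]; exact_mod_cast hsh0.ne'
  have hs2s : ((Real.sqrt (lam / Real.sinh lam) : ℝ) : ℂ) ^ 2 * Complex.sinh (lam : ℂ)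
      = (lam : ℂ) := by
    rw [← Complex.ofReal_pow, Real.sq_sqrt (by positivity), ← Complex.ofReal_sinh,
      ← Complex.ofReal_mul, div_mul_cancel₀ _ hsh0.ne']
  have hu : Complex.sinh (lam : ℂ) * (Complex.sinh (lam : ℂ))⁻¹ = 1 :=
    mul_inv_cancel₀ hshC
  have hC : Complex.cosh (lam : ℂ)
      = Complex.cosh ((lam : ℂ)/2) ^ 2 + Complex.sinh ((lam : ℂ)/2) ^ 2 := by
    rw [← Complex.cosh_two_mul]; congr 1; ring
  have hS : Complex.sinh (lam : ℂ)
      = 2 * Complex.sinh ((lam : ℂ)/2) * Complex.cosh ((lam : ℂ)/2) := by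
    rw [← Complex.sinh_two_mul]; congr 1; ring
  simp only [mul_add, mul_sub, Finset.mul_sum]
  rw [← Finset.sum_add_distrib, ← Finset.sum_sub_distrib, ← Finset.sum_add_distrib,
    ← Finset.sum_add_distrib]
  refine Finset.sum_congr rfl fun j _ => ?_
  simp only [sigmaLam, map_mul, map_sub, map_add, Complex.conj_ofReal, Complex.conj_I]
  push_cast
  set q : ℂ := ((Real.sqrt (lam / Real.sinh lam) : ℝ) : ℂ) with hq
  set c : ℂ := Complex.cosh ((lam : ℂ)/2) with hc
  set s : ℂ := Complex.sinh ((lam : ℂ)/2) with hs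
  set t1 : ℂ := ζ'.1 j * (starRingEnd ℂ) (ζ.1 j)
  set t2 : ℂ := ζ'.2 j * (starRingEnd ℂ) (ζ.2 j)
  set t3 : ℂ := ζ'.1 j * (starRingEnd ℂ) (ζ.2 j)
  set t4 : ℂ := ζ'.2 j * (starRingEnd ℂ) (ζ.1 j)
  linear_combination
    ((1/2) * (t1 + t2) * Complex.cosh (lam : ℂ) * (Complex.sinh (lam : ℂ))⁻¹
        + Complex.I/2 * (t3 - t4)) * hs2s
      - (1/2) * (t1 + t2) * q^2 * Complex.cosh (lam : ℂ) * hu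
      - (1/2) * (t1 + t2) * q^2 * hC
      - Complex.I/2 * (t3 - t4) * q^2 * hS
      - (1/2) * q^2 * s^2 * (t1 + t2) * Complex.I_sq

end QuantumHermite
end
end

section
/- Let n ≥ 1 and λ > 0. For f ∈ 𝒮(ℝ^{2n}) define the dilation D_λ f(ξ) = c(λ)^{n/2} f(c(λ)^{1/2} ξ), the Bargmann transform Bf(ζ) = π^{-n} e^{(1/4)∑_{j=1}^{2n} ζ_j²} ∫_{ℝ^{2n}} f(ξ) e^{-(1/2)∑_{j=1}^{2n}(ξ_j − ζ_j)²} dξ for ζ ∈ ℂ^{2n}, and the holomorphically extended twisted convolution (g ∗_λ p_{1/2}^λ)(ζ) = ∫_{ℝ^{2n}} g(η) p_{1/2}^λ(ζ−η) e^{−i(λ/2)[ζ,η]} dη, where p_t^λ(ζ) = (4π)^{-n} λ^n (sinh tλ)^{-n} e^{-(λ/4)(coth tλ)∑_{j=1}^{2n} ζ_j²} for ζ ∈ ℂ^{2n} and [(z,w),(y,v)] = w·y − z·v for (z,w) ∈ ℂ^{2n}, (y,v) ∈ ℝ^{2n}. Then for every ζ ∈ ℂ^{2n}: π^{n/2} c_{n,λ}^{1/2}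 (Bf)(σ_λ ζ) = c_{n,λ} p_1^λ(ζ)^{-1} ((D_λ f) ∗_λ p_{1/2}^λ)(ζ). -/
open MeasureTheory Complex
open scoped Real ENNReal InnerProductSpace

noncomputable section

namespace QuantumHermite

/-- The Bargmann transform on `ℝ^{2n}`, evaluated at a point of `ℂ^{2n}`. -/
def bargmann (n : ℕ) (f : R2n n → ℂ) (ζ : C2n n) : ℂ :=
  ((Real.pi⁻¹ ^ n : ℝ) : ℂ) *
    Complex.exp ((1 / 4) * ((∑ j, ζ.1 j ^ 2) + ∑ j, ζ.2 j ^ 2)) *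
    ∫ ξ : R2n n, f ξ * Complex.exp (-(1 / 2) *
      ((∑ j, ((ξ.1 j : ℂ) - ζ.1 j) ^ 2) + ∑ j, ((ξ.2 j : ℂ) - ζ.2 j) ^ 2))

/-- The holomorphic extension of the twisted heat kernel `p_t^λ` to `ℂ^{2n}`. -/
def heatKernelC (n : ℕ) (lam t : ℝ) (ζ : C2n n) : ℂ :=
  ((((4 * Real.pi)⁻¹) ^ n * lam ^ n * ((Real.sinh (t * lam))⁻¹) ^ n : ℝ) : ℂ) *
    Complex.exp (-((lam / 4) * (Real.cosh (t * lam) / Real.sinh (t * lam)) : ℝ) *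
      ((∑ j, ζ.1 j ^ 2) + ∑ j, ζ.2 j ^ 2))

/-- The holomorphically extended twisted convolution `(g ∗_λ p_t^λ)(ζ)` for `ζ ∈ ℂ^{2n}`. -/
def twConvHeatC (n : ℕ) (lam : ℝ) (g : R2n n → ℂ) (t : ℝ) (ζ : C2n n) : ℂ :=
  ∫ η : R2n n, g η *
    heatKernelC n lam t (fun j => ζ.1 j - (η.1 j : ℂ), fun j => ζ.2 j - (η.2 j : ℂ)) *
    Complex.exp (-Complex.I * ((lam / 2 : ℝ) : ℂ) *
      ((∑ j, ζ.2 j * (η.1 j : ℂ)) - ∑ j, ζ.1 j * (η.2 j : ℂ)))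

/-- The dilation `D_λ f(ξ) = c(λ)^{n/2} f(c(λ)^{1/2} ξ)` on `ℝ^{2n}`. -/
def dilateLam (n : ℕ) (lam : ℝ) (f : R2n n → ℂ) (ξ : R2n n) : ℂ :=
  ((cLam lam ^ ((n : ℝ) / 2) : ℝ) : ℂ) *
    f (fun j => Real.sqrt (cLam lam) * ξ.1 j, fun j => Real.sqrt (cLam lam) * ξ.2 j)


/-- Auxiliary: splitting a linear combination of two pairs of sums into a single sum. -/
lemma aux_sum_split2 {n : ℕ} (a b : ℂ) (A B C D : Fin n → ℂ) :
    a * ((∑ j, A j) + ∑ j, B j) + b * ((∑ j, C j) + ∑ j, D j)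
      = ∑ j, (a * (A j + B j) + b * (C j + D j)) := by
  simp only [mul_add, Finset.mul_sum, ← Finset.sum_add_distrib]

/-- Auxiliary: splitting a linear combination of three pairs of sums into a single sum. -/
lemma aux_sum_split3 {n : ℕ} (a b c : ℂ) (A B C D E F : Fin n → ℂ) :
    a * ((∑ j, A j) + ∑ j, B j) + (b * ((∑ j, C j) + ∑ j, D j) + c * ((∑ j, E j) - ∑ j, F j))
      = ∑ j, (a * (A j + B j) + (b * (C j + D j) + c * (E j - F j))) := by
  simp only [mul_add, mul_sub, Finset.mul_sum, ← Finset.sum_add_distrib,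
    ← Finset.sum_sub_distrib]

/-- Auxiliary: square root of a natural power. -/
lemma aux_sqrt_pow (x : ℝ) (hx : 0 ≤ x) (m : ℕ) :
    Real.sqrt (x ^ m) = Real.sqrt x ^ m := by
  rw [show x ^ m = (Real.sqrt x ^ m) ^ 2 by
      rw [← pow_mul, mul_comm, pow_mul, Real.sq_sqrt hx],
    Real.sqrt_sq (pow_nonneg (Real.sqrt_nonneg x) m)]

/-- Auxiliary: a real power `x ^ (n/2)` as a natural power of the square root. -/
lemma aux_rpow_half (x : ℝ) (hx : 0 ≤ x) (m : ℕ) :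
    x ^ ((m : ℝ) / 2) = Real.sqrt x ^ m := by
  rw [show ((m : ℝ) / 2) = (1/2) * (m : ℝ) by ring, Real.rpow_mul hx,
    ← Real.sqrt_eq_rpow, Real.rpow_natCast]


/-- Auxiliary: combining constants and exponentials. -/
lemma aux_combine {A B cnl pre1 c2 sc pre2 fx Ea Eb X1 X2 X3 : ℂ}
    (hconst : A * B = cnl * pre1⁻¹ * c2 * sc * pre2)
    (hexp : Ea + Eb = -X1 + (X2 + X3)) :
    A * B * Complex.exp Ea * (fx * Complex.exp Eb)
      = cnl * (pre1 * Complex.exp X1)⁻¹ * c2 * sc *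
        (fx * (pre2 * Complex.exp X2) * Complex.exp X3) := by
  rw [mul_inv, ← Complex.exp_neg]
  calc A * B * Complex.exp Ea * (fx * Complex.exp Eb)
      = (A * B) * Complex.exp (Ea + Eb) * fx := by rw [Complex.exp_add]; ring
    _ = (cnl * pre1⁻¹ * c2 * sc * pre2) * Complex.exp (-X1 + (X2 + X3)) * fx := by
        rw [hconst, hexp]
    _ = _ := by rw [Complex.exp_add, Complex.exp_add]; ring

/-- The twisted Bargmann transform intertwines with the classical Bargmann transform via
the dilation `D_λ`: `π^{n/2} c_{n,λ}^{1/2} (Bf)(σ_λ ζ) = c_{n,λ} p_1^λ(ζ)^{-1}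
((D_λ f) ∗_λ p_{1/2}^λ)(ζ)`. -/
theorem bargmann_dilation_identity (n : ℕ) (hn : 1 ≤ n) (lam : ℝ) (hlam : 0 < lam)
    (f : SchwartzMap (R2n n) ℂ) (ζ : C2n n) :
    ((Real.pi ^ ((n : ℝ) / 2) * Real.sqrt (cnl n lam) : ℝ) : ℂ) *
        bargmann n (⇑f) (sigmaLam n lam ζ) =
      ((cnl n lam : ℝ) : ℂ) * (heatKernelC n lam 1 ζ)⁻¹ *
        twConvHeatC n lam (dilateLam n lam ⇑f) (1 / 2) ζ := by
  classical
  have hpi : (0:ℝ) < Real.pi := Real.pi_pos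
  have hs : 0 < Real.sinh (lam/2) := Real.sinh_pos_iff.2 (by linarith)
  have hch : 0 < Real.cosh (lam/2) := Real.cosh_pos _
  have hsinh : Real.sinh lam = 2 * Real.sinh (lam/2) * Real.cosh (lam/2) := by
    rw [show lam = lam/2 + lam/2 by ring, Real.sinh_add]; ring
  have hcosh : Real.cosh lam = Real.cosh (lam/2)^2 + Real.sinh (lam/2)^2 := by
    rw [show lam = lam/2 + lam/2 by ring, Real.cosh_add]; ring
  have hsl : 0 < Real.sinh lam := Real.sinh_pos_iff.2 hlam
  have hc : 0 < cLam lam := by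
    unfold cLam; positivity
  -- unfold all definitions and normalize the scalar arguments
  simp only [bargmann, twConvHeatC, heatKernelC, dilateLam, sigmaLam, one_mul,
    show (1/2:ℝ)*lam = lam/2 by ring]
  set q : ℝ := Real.sqrt (cLam lam) with hq_def
  set r : ℝ := Real.sqrt (lam / Real.sinh lam) with hr_def
  have hq0 : 0 < q := Real.sqrt_pos.2 hc
  have hr2 : r^2 = lam / Real.sinh lam := Real.sq_sqrt (by positivity)
  have hq2 : q^2 = cLam lam := Real.sq_sqrt hc.le
  have hqrc : q = r * Real.cosh (lam/2) := by
    rw [hq_def, show cLam lam = (lam / Real.sinh lam) * Real.cosh (lam/2)^2 by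
        unfold cLam; rw [hsinh]; field_simp,
      Real.sqrt_mul (by positivity), Real.sqrt_sq hch.le]
  have hqC : (q:ℂ) ≠ 0 := by
    simpa using hq0.ne'
  -- the basic real identities
  have hk1 : lam/4 * (Real.cosh lam / Real.sinh lam)
      = r^2*(Real.cosh (lam/2)^2 + Real.sinh (lam/2)^2)/4 := by
    rw [hr2, hcosh, hsinh]; field_simp
  have hk2 : lam/4 * (Real.cosh (lam/2) / Real.sinh (lam/2))
      = r^2*Real.cosh (lam/2)^2/2 := by
    rw [hr2, hsinh]; field_simp; ring
  have hl2 : lam/2 = Real.sinh (lam/2) * r^2 * Real.cosh (lam/2) := by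
    rw [hr2, hsinh]; field_simp
  -- complex versions
  have hk1C : ((lam/4 * (Real.cosh lam / Real.sinh lam) : ℝ) : ℂ)
      = (r:ℂ)^2*(((Real.cosh (lam/2):ℝ):ℂ)^2 + ((Real.sinh (lam/2):ℝ):ℂ)^2)/4 := by
    rw [hk1]; push_cast; ring
  have hk2C : ((lam/4 * (Real.cosh (lam/2) / Real.sinh (lam/2)) : ℝ) : ℂ)
      = (r:ℂ)^2*((Real.cosh (lam/2):ℝ):ℂ)^2/2 := by
    rw [hk2]; push_cast; ring
  have hl2C : ((lam/2 : ℝ) : ℂ)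
      = ((Real.sinh (lam/2):ℝ):ℂ) * (r:ℂ)^2 * ((Real.cosh (lam/2):ℝ):ℂ) := by
    conv_lhs => rw [hl2]
    push_cast; ring
  have hxsplit : ∀ x : ℝ, (x : ℂ)
      = (r:ℂ) * ((Real.cosh (lam/2):ℝ):ℂ) * ((q⁻¹ * x : ℝ) : ℂ) := by
    intro x
    rw [show ((q⁻¹ * x : ℝ) : ℂ) = ((q:ℂ))⁻¹ * (x:ℂ) by push_cast; ring,
      show (r:ℂ) * ((Real.cosh (lam/2):ℝ):ℂ) = (q:ℂ) by
        rw [← Complex.ofReal_mul, ← hqrc],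
      mul_inv_cancel_left₀ hqC]
  -- the substituted integrand
  set G : R2n n → ℂ := fun ξ => f ξ *
      (((((4 * Real.pi)⁻¹) ^ n * lam ^ n * ((Real.sinh (lam/2))⁻¹) ^ n : ℝ) : ℂ) *
        Complex.exp (-((lam / 4 * (Real.cosh (lam/2) / Real.sinh (lam/2)) : ℝ) : ℂ) *
          ((∑ x, (ζ.1 x - ((q⁻¹ * ξ.1 x : ℝ):ℂ)) ^ 2) +
            ∑ x, (ζ.2 x - ((q⁻¹ * ξ.2 x : ℝ):ℂ)) ^ 2))) *
      Complex.exp (-Complex.I * ((lam / 2 : ℝ) : ℂ) *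
        ((∑ j, ζ.2 j * ((q⁻¹ * ξ.1 j : ℝ):ℂ)) - ∑ j, ζ.1 j * ((q⁻¹ * ξ.2 j : ℝ):ℂ)))
    with hG_def
  have hcan : ∀ x : ℝ, q⁻¹ * (q * x) = x := fun x => inv_mul_cancel_left₀ hq0.ne' x
  have hint : ∀ η : R2n n,
      ((cLam lam ^ ((n:ℝ)/2) : ℝ) : ℂ) * f (fun j => q * η.1 j, fun j => q * η.2 j) *
        (((((4 * Real.pi)⁻¹) ^ n * lam ^ n * ((Real.sinh (lam/2))⁻¹) ^ n : ℝ) : ℂ) *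
          Complex.exp (-((lam / 4 * (Real.cosh (lam/2) / Real.sinh (lam/2)) : ℝ) : ℂ) *
            ((∑ x, (ζ.1 x - ((η.1 x : ℝ):ℂ)) ^ 2) + ∑ x, (ζ.2 x - ((η.2 x : ℝ):ℂ)) ^ 2))) *
        Complex.exp (-Complex.I * ((lam / 2 : ℝ) : ℂ) *
          ((∑ j, ζ.2 j * ((η.1 j : ℝ):ℂ)) - ∑ j, ζ.1 j * ((η.2 j : ℝ):ℂ)))
      = ((cLam lam ^ ((n:ℝ)/2) : ℝ) : ℂ) * G (q • η) := by
    intro η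
    have h1 : q • η = (fun j => q * η.1 j, fun j => q * η.2 j) := rfl
    rw [hG_def, h1]
    simp only [hcan]
    ring
  simp only [hint]
  rw [MeasureTheory.integral_const_mul]
  have hHaar : (∫ η : R2n n, G (q • η)) = ((q ^ (n+n))⁻¹ : ℝ) • ∫ ξ, G ξ := by
    haveI : (volume : Measure (R2n n)).IsAddHaarMeasure :=
      Measure.prod.instIsAddHaarMeasure _ _
    have h := MeasureTheory.Measure.integral_comp_smul_of_nonneg
      (volume : Measure (R2n n)) G q (hR := hq0.le)
    rwa [show Module.finrank ℝ (R2n n) = n + n by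
      simp [Module.finrank_prod, Module.finrank_pi]] at h
  rw [hHaar, Complex.real_smul]
  have rearL : ∀ (a b e : ℂ) (g : R2n n → ℂ),
      a * (b * e * ∫ x, g x) = ∫ x, a * b * e * g x := by
    intro a b e g; rw [MeasureTheory.integral_const_mul]; ring
  have rearR : ∀ (a b c d : ℂ) (g : R2n n → ℂ),
      a * b * (c * (d * ∫ x, g x)) = ∫ x, a * b * c * d * g x := by
    intro a b c d g; rw [MeasureTheory.integral_const_mul]; ring
  rw [rearL, rearR]
  -- the real constants identity
  have h4 : (0:ℝ) < (4*Real.pi)⁻¹ := by positivity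
  have hb1pos : 0 < (4*Real.pi)⁻¹ * lam * (Real.sinh lam)⁻¹ :=
    mul_pos (mul_pos h4 hlam) (inv_pos.2 hsl)
  have hb2pos : 0 < (4*Real.pi)⁻¹ * lam * (Real.sinh (lam/2))⁻¹ :=
    mul_pos (mul_pos h4 hlam) (inv_pos.2 hs)
  have hcnl_eq : cnl n lam = ((4*Real.pi)⁻¹ * lam * (Real.sinh lam)⁻¹)^n := by
    unfold cnl; rw [mul_pow, mul_pow]
  have hcnlpos : 0 < cnl n lam := by rw [hcnl_eq]; exact pow_pos hb1pos n
  have hconst : (Real.pi ^ ((n : ℝ) / 2) * Real.sqrt (cnl n lam)) * (Real.pi⁻¹ ^ n)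
      = cnl n lam * (((4*Real.pi)⁻¹)^n * lam^n * ((Real.sinh lam)⁻¹)^n)⁻¹ *
        (cLam lam ^ ((n:ℝ)/2)) * ((q^(n+n))⁻¹) *
        (((4*Real.pi)⁻¹)^n * lam^n * ((Real.sinh (lam/2))⁻¹)^n) := by
    rw [show (((4*Real.pi)⁻¹)^n * lam^n * ((Real.sinh lam)⁻¹)^n : ℝ) = cnl n lam from rfl,
      mul_inv_cancel₀ hcnlpos.ne', one_mul,
      aux_rpow_half Real.pi hpi.le n,
      hcnl_eq, aux_sqrt_pow _ hb1pos.le n,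
      aux_rpow_half (cLam lam) hc.le n, ← hq_def,
      show (((4*Real.pi)⁻¹)^n * lam^n * ((Real.sinh (lam/2))⁻¹)^n : ℝ)
        = ((4*Real.pi)⁻¹ * lam * (Real.sinh (lam/2))⁻¹)^n from by rw [mul_pow, mul_pow],
      show ((q^(n+n))⁻¹ : ℝ) = ((q^2)⁻¹)^n from by
        rw [show n+n = 2*n from (two_mul n).symm, pow_mul, ← inv_pow],
      ← mul_pow, ← mul_pow, ← mul_pow, ← mul_pow]
    refine congrArg (· ^ n) ?_
    rw [show q * (q^2)⁻¹ = q⁻¹ from by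
        rw [pow_two, mul_inv, ← mul_assoc, mul_inv_cancel₀ hq0.ne', one_mul],
      ← Real.sqrt_mul hpi.le]
    have hval : Real.pi * ((4*Real.pi)⁻¹ * lam * (Real.sinh lam)⁻¹)
        = (q⁻¹ * ((4*Real.pi)⁻¹ * lam * (Real.sinh (lam/2))⁻¹) * Real.pi)^2 := by
      rw [mul_pow, mul_pow, inv_pow, hq2]
      unfold cLam
      rw [hsinh]
      field_simp
      ring
    rw [hval, Real.sqrt_sq (by
      have : (0:ℝ) ≤ q⁻¹ := (inv_pos.2 hq0).le
      have := hb2pos.le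
      positivity)]
    rw [mul_inv_cancel_right₀ hpi.ne']
  have hconstC : ((Real.pi ^ ((n : ℝ) / 2) * Real.sqrt (cnl n lam) : ℝ) : ℂ) *
        ((Real.pi⁻¹ ^ n : ℝ) : ℂ)
      = ((cnl n lam : ℝ) : ℂ) *
          (((((4*Real.pi)⁻¹)^n * lam^n * ((Real.sinh lam)⁻¹)^n : ℝ) : ℂ))⁻¹ *
          ((cLam lam ^ ((n:ℝ)/2) : ℝ) : ℂ) * (((q^(n+n))⁻¹ : ℝ) : ℂ) *
          ((((4*Real.pi)⁻¹)^n * lam^n * ((Real.sinh (lam/2))⁻¹)^n : ℝ) : ℂ) := by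
    rw [← Complex.ofReal_inv, ← Complex.ofReal_mul, ← Complex.ofReal_mul,
      ← Complex.ofReal_mul, ← Complex.ofReal_mul, ← Complex.ofReal_mul]
    exact congrArg Complex.ofReal hconst
  refine MeasureTheory.integral_congr_ae (MeasureTheory.ae_of_all _ fun ξ => ?_)
  simp only [hG_def]
  have hexpξ :
      (1 / 4 : ℂ) *
          ((∑ x, ((r:ℂ) * (((Real.cosh (lam/2) : ℝ):ℂ) * ζ.1 x
              - Complex.I * ((Real.sinh (lam/2) : ℝ):ℂ) * ζ.2 x))^2) +
            ∑ x, ((r:ℂ) * (((Real.cosh (lam/2) : ℝ):ℂ) * ζ.2 x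
              + Complex.I * ((Real.sinh (lam/2) : ℝ):ℂ) * ζ.1 x))^2)
        + -(1 / 2 : ℂ) *
          ((∑ x, (((ξ.1 x : ℝ):ℂ) - (r:ℂ) * (((Real.cosh (lam/2) : ℝ):ℂ) * ζ.1 x
              - Complex.I * ((Real.sinh (lam/2) : ℝ):ℂ) * ζ.2 x))^2) +
            ∑ x, (((ξ.2 x : ℝ):ℂ) - (r:ℂ) * (((Real.cosh (lam/2) : ℝ):ℂ) * ζ.2 x
              + Complex.I * ((Real.sinh (lam/2) : ℝ):ℂ) * ζ.1 x))^2)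
      = -(-(((lam/4 * (Real.cosh lam / Real.sinh lam) : ℝ):ℂ)) *
            ((∑ j, ζ.1 j ^ 2) + ∑ j, ζ.2 j ^ 2))
        + ((-(((lam/4 * (Real.cosh (lam/2) / Real.sinh (lam/2)) : ℝ):ℂ)) *
              ((∑ x, (ζ.1 x - ((q⁻¹ * ξ.1 x : ℝ):ℂ))^2) +
                ∑ x, (ζ.2 x - ((q⁻¹ * ξ.2 x : ℝ):ℂ))^2))
          + (-Complex.I * ((lam/2 : ℝ):ℂ)) *
              ((∑ j, ζ.2 j * ((q⁻¹ * ξ.1 j : ℝ):ℂ)) -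
                ∑ j, ζ.1 j * ((q⁻¹ * ξ.2 j : ℝ):ℂ))) := by
    conv_rhs => rw [neg_mul, neg_neg]
    rw [aux_sum_split2, aux_sum_split3]
    refine Finset.sum_congr rfl fun j _ => ?_
    rw [hxsplit (ξ.1 j), hxsplit (ξ.2 j), hk1C, hk2C, hl2C]
    linear_combination
      (-((r:ℂ)^2 * (((Real.sinh (lam/2) : ℝ):ℂ))^2 * (ζ.1 j^2 + ζ.2 j^2))/4) * Complex.I_sq
  exact aux_combine hconstC hexpξ


end QuantumHermite
end
end
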